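/- arXiv:2510.16006 — 3 statements merged into one kernel-verified Lean document; each statement's English description precedes it below -/
import Mathlib

section
/- If S is an aperiodic automorphism of a standard probability space, then the cohomology class of the trivial extension S × Id is dense in Ext(S): for every skew product R over S and every δ > 0 there exists J ∈ 𝒥 (an automorphism of X × X preserving every set A × X) such that μ⊗μ({z : J^{-1}(S × Id)J z ≠ R z}) < δ. -/
/-!
By Rokhlin's lemma there is a set `B` such that `B, S⁻¹B, …, S⁻⁽ⁿ⁻¹⁾B` are disjoint, whence
`μ B ≤ 1/n`, and which almost every backward orbit meets; it is obtained by greedy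
exhaustion, using that an aperiodic `S` moves part of every non-null set off itself.
Let `h x` be the time since the backward orbit of `x` last visited `B`, and let `J` act on the
fibre over `x` by the inverse of the cocycle `C(S⁻ʰ⁽ˣ⁾x, h x)`. Then `J ∈ 𝒥`, and
`J⁻¹ (S × Id) J = R` over every `x` with `h (S x) = h x + 1`, that is, for almost every `x`
outside `S⁻¹B`, a set of measure at most `1/n`.
-/

open MeasureTheory Set

/-- A measure-preserving automorphism of `(X, μ)`. -/
structure Aut (X : Type*) [MeasurableSpace X] (μ : Measure X) where
  toEquiv : X ≃ᵐ X
  mp : MeasurePreserving toEquiv μ μ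

namespace Aut

variable {X : Type*} [MeasurableSpace X] {μ : Measure X}

/-- The identity automorphism. -/
def id (μ : Measure X) : Aut X μ := ⟨MeasurableEquiv.refl X, MeasurePreserving.id μ⟩

/-- Composition of automorphisms: `(a.comp b) x = a (b x)`. -/
def comp (a b : Aut X μ) : Aut X μ :=
  ⟨b.toEquiv.trans a.toEquiv, a.mp.comp b.mp⟩

/-- Inverse automorphism. -/
def inv (a : Aut X μ) : Aut X μ := ⟨a.toEquiv.symm, a.mp.symm a.toEquiv⟩

end Aut

/-- The Halmos (pseudo)metric on `Aut X μ` associated with a fixed family `A`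
of measurable sets (dense in the measure algebra):
`ρ(S,T) = Σ_i 2^{-i} (μ(S A_i Δ T A_i) + μ(S⁻¹ A_i Δ T⁻¹ A_i))`. -/
noncomputable def halmos {X : Type*} [MeasurableSpace X] {μ : Measure X}
    (A : ℕ → Set X) (S T : Aut X μ) : ℝ :=
  ∑' i : ℕ, (1 / 2 : ℝ) ^ i *
    ((μ (symmDiff (S.toEquiv '' A i) (T.toEquiv '' A i))).toReal +
     (μ (symmDiff (S.toEquiv.symm '' A i) (T.toEquiv.symm '' A i))).toReal)

/-- A skew product over `S`: an automorphism `R` of the product space together with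
a measurable family of fiber automorphisms `T x` such that `R(x,y) = (Sx, T_x y)`. -/
structure SkewExt {X : Type*} [MeasurableSpace X] {μ : Measure X} (S : Aut X μ) where
  T : X → Aut X μ
  prod : Aut (X × X) (μ.prod μ)
  spec : ∀ p : X × X, prod.toEquiv p = (S.toEquiv p.1, (T p.1).toEquiv p.2)

/-- `R ∈ Ext(S)`: `R` is a skew product over `S` for some measurable family of fibers. -/
def IsSkewProduct {X : Type*} [MeasurableSpace X] {μ : Measure X}
    (S : Aut X μ) (R : Aut (X × X) (μ.prod μ)) : Prop :=
  ∃ T : X → Aut X μ, ∀ p : X × X, R.toEquiv p = (S.toEquiv p.1, (T p.1).toEquiv p.2)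

/-- The `n`-step cocycle `C(x,n,R) = T_{S^{n-1}x} ∘ ⋯ ∘ T_{Sx} ∘ T_x`. -/
noncomputable def cocycle {X : Type*} [MeasurableSpace X] {μ : Measure X}
    (S : Aut X μ) (T : X → Aut X μ) (x : X) : ℕ → Aut X μ
  | 0 => Aut.id μ
  | n + 1 => (T (S.toEquiv^[n] x)).comp (cocycle S T x n)

/-- Openness of a set with respect to a (pseudo)metric `d`. -/
def IsOpenWrt {Z : Type*} (d : Z → Z → ℝ) (U : Set Z) : Prop :=
  ∀ z ∈ U, ∃ ε > (0 : ℝ), ∀ w, d z w < ε → w ∈ U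

/-- `D` is a `G_δ` set with respect to the (pseudo)metric `d`. -/
def IsGdeltaWrt {Z : Type*} (d : Z → Z → ℝ) (D : Set Z) : Prop :=
  ∃ U : ℕ → Set Z, (∀ k, IsOpenWrt d (U k)) ∧ D = ⋂ k, U k

/-- `D` is dense with respect to the (pseudo)metric `d`. -/
def IsDenseWrt {Z : Type*} (d : Z → Z → ℝ) (D : Set Z) : Prop :=
  ∀ z : Z, ∀ ε > (0 : ℝ), ∃ w ∈ D, d z w < ε

/-- `S` is aperiodic: for every `n ≥ 1` the set of `n`-periodic points is null. -/
def Aperiodic {X : Type*} [MeasurableSpace X] {μ : Measure X} (S : Aut X μ) : Prop :=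
  ∀ n : ℕ, 1 ≤ n → μ {x : X | S.toEquiv^[n] x = x} = 0

/-- The trivial extension `S × Id`. -/
def prodId {X : Type*} [MeasurableSpace X] {μ : Measure X} [SFinite μ] (S : Aut X μ) :
    Aut (X × X) (μ.prod μ) :=
  ⟨S.toEquiv.prodCongr (MeasurableEquiv.refl X), S.mp.prod (MeasurePreserving.id μ)⟩

/-- Membership in `𝒥`: automorphisms of the product leaving every `A × X` invariant. -/
def MemJ {X : Type*} [MeasurableSpace X] {μ : Measure X}
    (J : Aut (X × X) (μ.prod μ)) : Prop :=
  ∀ A : Set X, MeasurableSet A → J.toEquiv '' (A ×ˢ (univ : Set X)) = A ×ˢ (univ : Set X)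

open Function
open scoped ENNReal

section Exhaustion

variable {X : Type*} [MeasurableSpace X] {μ : Measure X} [IsFiniteMeasure μ]

theorem exists_forall_measure_le_two_mul {Q : Set X → Prop} (hQ : Q ∅) :
    ∃ F, Q F ∧ ∀ G, Q G → μ G ≤ 2 * μ F := by
  set r := ⨆ (G) (_ : Q G), μ G
  have hle_r : ∀ G, Q G → μ G ≤ r := fun G hG => le_iSup₂ (f := fun G (_ : Q G) => μ G) G hG
  rcases eq_or_ne r 0 with hr | hr
  · exact ⟨∅, hQ, fun G hG => by simpa [hr] using hle_r G hG⟩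
  have hr_top : r ≠ ∞ :=
    ne_top_of_le_ne_top (measure_ne_top μ univ) (iSup₂_le fun G _ => measure_mono (subset_univ G))
  obtain ⟨F, hrF⟩ := lt_iSup_iff.1 (ENNReal.half_lt_self hr hr_top)
  obtain ⟨hF, hrF⟩ := lt_iSup_iff.1 hrF
  refine ⟨F, hF, fun G hG => (hle_r G hG).trans ?_⟩
  rw [mul_comm]
  exact (ENNReal.div_le_iff_le_mul (.inl two_ne_zero) (.inl ENNReal.ofNat_ne_top)).1 hrF.le

/-- Greedy exhaustion: at each step adjoin an admissible set outside the current hull, of at least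
half the largest possible measure. A non-null admissible `F` outside the final hull would be
available at every step, so every step would add at least `μ F / 2` to a finite measure. -/
theorem exists_measure_compl_hull_eq_zero {P : Set X → Prop} {H : Set X → Set X}
    (hP_meas : ∀ E, P E → MeasurableSet E) (hP_empty : P ∅)
    (hP_iUnion : ∀ E : ℕ → Set X, Monotone E → (∀ k, P (E k)) → P (⋃ k, E k))
    (hP_union : ∀ E F, P E → P F → Disjoint F (H E) → P (E ∪ F))
    (hP_pos : ∀ W, MeasurableSet W → μ W ≠ 0 → ∃ F ⊆ W, P F ∧ μ F ≠ 0)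
    (hH_mono : Monotone H) (hH_le : ∀ E, E ⊆ H E)
    (hH_meas : ∀ E, MeasurableSet E → MeasurableSet (H E)) :
    ∃ B, P B ∧ μ (H B)ᶜ = 0 := by
  have hpick (E : Set X) := exists_forall_measure_le_two_mul (μ := μ)
    (Q := fun F => P F ∧ Disjoint F (H E)) ⟨hP_empty, empty_disjoint _⟩
  choose pick hpick_adm hpick_large using hpick
  let seq : ℕ → Set X := fun k => Nat.rec ∅ (fun _ E => E ∪ pick E) k
  have hseq_succ : ∀ k, seq (k + 1) = seq k ∪ pick (seq k) := fun _ => rfl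
  have hseq_P : ∀ k, P (seq k) := fun k => by
    induction k with
    | zero => exact hP_empty
    | succ k ih => exact hseq_succ k ▸ hP_union _ _ ih (hpick_adm _).1 (hpick_adm _).2
  have hseq_mono : Monotone seq := monotone_nat_of_le_succ fun k => by
    rw [hseq_succ]; exact subset_union_left
  refine ⟨⋃ k, seq k, hP_iUnion seq hseq_mono hseq_P, ?_⟩
  by_contra hpos
  obtain ⟨F, hFW, hF, hF0⟩ :=
    hP_pos _ (hH_meas _ (hP_meas _ (hP_iUnion seq hseq_mono hseq_P))).compl hpos
  have hF_le : ∀ k, μ F ≤ 2 * μ (pick (seq k)) := fun k =>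
    hpick_large _ F ⟨hF, disjoint_compl_left.mono hFW (hH_mono (subset_iUnion seq k))⟩
  have hgrowth : ∀ k : ℕ, k * μ F ≤ 2 * μ (seq k) := fun k => by
    induction k with
    | zero => simp
    | succ k ih =>
      have hdisj : Disjoint (seq k) (pick (seq k)) :=
        ((hpick_adm _).2.mono_right (hH_le _)).symm
      rw [hseq_succ, measure_union hdisj (hP_meas _ (hpick_adm _).1), mul_add]
      push_cast
      rw [add_mul, one_mul]
      exact add_le_add ih (hF_le k)
  obtain ⟨k, hk⟩ := ENNReal.exists_nat_mul_gt hF0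
    (ENNReal.mul_ne_top (ENNReal.ofNat_ne_top (n := 2)) (measure_ne_top μ univ))
  exact (hk.trans_le (hgrowth k)).not_ge (by gcongr; exact subset_univ _)

end Exhaustion

section Rokhlin

variable {X : Type*} [MeasurableSpace X] {μ : Measure X} {S : Aut X μ} {n : ℕ} {E F : Set X}

/-- `F` is the base of a Rokhlin tower of height `n`: the sets `S⁻ᵏ F`, `0 ≤ k < n`, are
pairwise disjoint. -/
def IsTowerBase (S : Aut X μ) (n : ℕ) (F : Set X) : Prop :=
  ∀ x ∈ F, ∀ k, 0 < k → k < n → S.toEquiv^[k] x ∉ F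

/-- The union of the translates `Sᵏ E`, `|k| < n`. -/
def sweep (S : Aut X μ) (n : ℕ) (E : Set X) : Set X :=
  ⋃ k < n, (S.toEquiv^[k] ⁻¹' E ∪ S.toEquiv.symm^[k] ⁻¹' E)

theorem measurableSet_sweep (hE : MeasurableSet E) : MeasurableSet (sweep S n E) :=
  .biUnion (to_countable _) fun k _ =>
    ((S.toEquiv.measurable.iterate k) hE).union ((S.toEquiv.symm.measurable.iterate k) hE)

theorem sweep_mono : Monotone (sweep S n) := fun _ _ h =>
  biUnion_mono subset_rfl fun _ _ => union_subset_union (preimage_mono h) (preimage_mono h)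

theorem subset_sweep (hn : 0 < n) : E ⊆ sweep S n E := fun _ hx =>
  mem_biUnion hn (Or.inl hx)

theorem IsTowerBase.mono (hF : IsTowerBase S n F) (hEF : E ⊆ F) : IsTowerBase S n E :=
  fun x hx k hk0 hk hkx => hF x (hEF hx) k hk0 hk (hEF hkx)

theorem IsTowerBase.union (hE : IsTowerBase S n E) (hF : IsTowerBase S n F)
    (hFE : Disjoint F (sweep S n E)) : IsTowerBase S n (E ∪ F) := by
  rintro x (hx | hx) k hk0 hk (hkx | hkx)
  · exact hE x hx k hk0 hk hkx
  · refine hFE.ne_of_mem hkx (mem_biUnion hk (Or.inr ?_)) rfl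
    rwa [mem_preimage, (LeftInverse.iterate S.toEquiv.symm_apply_apply k) x]
  · exact hFE.ne_of_mem hx (mem_biUnion hk (Or.inl hkx)) rfl
  · exact hF x hx k hk0 hk hkx

theorem isTowerBase_iUnion {E : ℕ → Set X} (hmono : Monotone E)
    (hE : ∀ i, IsTowerBase S n (E i)) : IsTowerBase S n (⋃ i, E i) := by
  intro x hx k hk0 hk hkx
  obtain ⟨i, hi⟩ := mem_iUnion.1 hx
  obtain ⟨j, hj⟩ := mem_iUnion.1 hkx
  exact hE (max i j) x (hmono (le_max_left i j) hi) k hk0 hk (hmono (le_max_right i j) hj)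

theorem IsTowerBase.natCast_mul_measure_le (hF : IsTowerBase S n F) (hFm : MeasurableSet F) :
    (n : ℝ≥0∞) * μ F ≤ μ univ := by
  have hdisj : Pairwise (Disjoint on fun k : Fin n => S.toEquiv^[k] ⁻¹' F) := by
    refine (pairwise_disjoint_on _).2 fun i j hij => disjoint_left.2 fun x hi hj => ?_
    refine hF _ hi (j - i) (by omega) (by omega) ?_
    rwa [← iterate_add_apply, Nat.sub_add_cancel (by omega : (i : ℕ) ≤ j)]
  calc (n : ℝ≥0∞) * μ F = ∑ k : Fin n, μ (S.toEquiv^[k] ⁻¹' F) := by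
        simp [(S.mp.iterate _).measure_preimage hFm.nullMeasurableSet]
    _ = μ (⋃ k : Fin n, S.toEquiv^[k] ⁻¹' F) :=
        ((measure_iUnion hdisj fun k => (S.toEquiv.measurable.iterate k) hFm).trans
          (tsum_fintype _)).symm
    _ ≤ μ univ := measure_mono (subset_univ _)

/-- Off the null set of `k`-periodic points, `x` and `Sᵏ x` differ in some coordinate of a
measurable injection `X → ℕ → Bool`, so the countably many sets where a fixed coordinate flips
cover `W` up to a null set. -/
theorem exists_subset_iterate_notMem [MeasurableSpace.CountablySeparated X] (hS : Aperiodic S)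
    {k : ℕ} (hk : 0 < k) {W : Set X} (hW : MeasurableSet W) (hW0 : μ W ≠ 0) :
    ∃ F ⊆ W, MeasurableSet F ∧ μ F ≠ 0 ∧ ∀ x ∈ F, S.toEquiv^[k] x ∉ F := by
  obtain ⟨f, hf, hinj⟩ := MeasurableSpace.measurable_injection_nat_bool_of_countablySeparated X
  let G : ℕ × Bool → Set X := fun p =>
    W ∩ {x | f x p.1 = p.2} ∩ {x | f (S.toEquiv^[k] x) p.1 = p.2}ᶜ
  have hG : ∀ p, MeasurableSet (G p) := fun p =>
    (hW.inter (((measurable_pi_apply p.1).comp hf) (measurableSet_singleton p.2))).inter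
      (((measurable_pi_apply p.1).comp (hf.comp (S.toEquiv.measurable.iterate k)))
        (measurableSet_singleton p.2)).compl
  have hcover : W ⊆ (⋃ p, G p) ∪ {x | S.toEquiv^[k] x = x} := by
    intro x hx
    by_cases hper : S.toEquiv^[k] x = x
    · exact Or.inr hper
    obtain ⟨m, hm⟩ := ne_iff.1 (hinj.ne (Ne.symm hper))
    exact Or.inl (mem_iUnion.2 ⟨(m, f x m), ⟨hx, rfl⟩, Ne.symm hm⟩)
  obtain ⟨p, hp⟩ : ∃ p, μ (G p) ≠ 0 := by
    by_contra! h
    exact hW0 (measure_mono_null hcover (measure_union_null (measure_iUnion_null h) (hS k hk)))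
  exact ⟨G p, fun x hx => hx.1.1, hG p, hp, fun _ hx hkx => hx.2 hkx.1.2⟩

theorem exists_isTowerBase_subset [MeasurableSpace.CountablySeparated X] (hS : Aperiodic S)
    (n : ℕ) {W : Set X} (hW : MeasurableSet W) (hW0 : μ W ≠ 0) :
    ∃ F ⊆ W, MeasurableSet F ∧ μ F ≠ 0 ∧ IsTowerBase S n F := by
  induction n with
  | zero => exact ⟨W, subset_rfl, hW, hW0, fun _ _ k _ hk => absurd hk k.not_lt_zero⟩
  | succ n ih =>
    obtain ⟨F, hFW, hFm, hF0, hF⟩ := ih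
    rcases n.eq_zero_or_pos with rfl | hn
    · exact ⟨F, hFW, hFm, hF0, fun _ _ k hk0 hk => by omega⟩
    obtain ⟨G, hGF, hGm, hG0, hG⟩ := exists_subset_iterate_notMem hS hn hFm hF0
    refine ⟨G, hGF.trans hFW, hGm, hG0, fun x hx k hk0 hk => ?_⟩
    rcases Nat.lt_succ_iff_lt_or_eq.1 hk with hk | rfl
    · exact (hF.mono hGF) x hx k hk0 hk
    · exact hG x hx

/-- Rokhlin's lemma. -/
theorem exists_isTowerBase_measure_compl_sweep_eq_zero [MeasurableSpace.CountablySeparated X]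
    [IsFiniteMeasure μ] (hS : Aperiodic S) (hn : 0 < n) :
    ∃ B, (MeasurableSet B ∧ IsTowerBase S n B) ∧ μ (sweep S n B)ᶜ = 0 :=
  exists_measure_compl_hull_eq_zero (fun _ hE => hE.1) ⟨.empty, fun _ h => h.elim⟩
    (fun _ hmono hE => ⟨.iUnion fun k => (hE k).1, isTowerBase_iUnion hmono fun k => (hE k).2⟩)
    (fun _ _ hE hF hFE => ⟨hE.1.union hF.1, hE.2.union hF.2 hFE⟩)
    (fun _ hW hW0 => (exists_isTowerBase_subset hS n hW hW0).imp
      fun _ ⟨hFW, hFm, hF0, hF⟩ => ⟨hFW, ⟨hFm, hF⟩, hF0⟩)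
    sweep_mono (fun _ => subset_sweep hn) (fun _ => measurableSet_sweep)

theorem ae_exists_iterate_symm_mem {B : Set X} (hB : μ (sweep S n B)ᶜ = 0) :
    ∀ᵐ x ∂μ, ∃ k, S.toEquiv.symm^[k] x ∈ B := by
  have hsub : {x | ¬∃ k, S.toEquiv.symm^[k] x ∈ B} ⊆
      S.toEquiv.symm^[n - 1] ⁻¹' (sweep S n B)ᶜ := by
    intro x hx hsweep
    obtain ⟨k, hk, hkx | hkx⟩ := mem_iUnion₂.1 hsweep
    · refine hx ⟨n - 1 - k, ?_⟩
      rwa [mem_preimage, show n - 1 = k + (n - 1 - k) by omega, iterate_add_apply,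
        (LeftInverse.iterate S.toEquiv.apply_symm_apply k)] at hkx
    · exact hx ⟨k + (n - 1), by rwa [iterate_add_apply]⟩
  exact measure_mono_null hsub (((S.mp.symm _).iterate (n - 1)).preimage_null hB)

end Rokhlin

section LastVisit

variable {X : Type*} [MeasurableSpace X] {μ : Measure X} (S : Aut X μ) (B : Set X)

theorem exists_iterate_symm_mem_or_forall_notMem (x : X) :
    ∃ k, S.toEquiv.symm^[k] x ∈ B ∨ ∀ j, S.toEquiv.symm^[j] x ∉ B := by
  by_cases h : ∃ k, S.toEquiv.symm^[k] x ∈ B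
  · exact h.imp fun _ => Or.inl
  · exact ⟨0, Or.inr (not_exists.1 h)⟩

open Classical in
/-- The time elapsed since the backward orbit of `x` last visited `B`
(junk value `0` if it never did). -/
noncomputable def lastVisit (x : X) : ℕ :=
  Nat.find (exists_iterate_symm_mem_or_forall_notMem S B x)

variable {S B}

theorem measurable_lastVisit (hB : MeasurableSet B) : Measurable (lastVisit S B) := by
  classical
  refine measurable_find _ fun k => ?_
  simp only [ofPred_or, ofPred_forall]
  exact ((S.toEquiv.symm.measurable.iterate k) hB).union
    (.iInter fun j => ((S.toEquiv.symm.measurable.iterate j) hB).compl)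

theorem lastVisit_apply_of_notMem {x : X} (hx : ∃ k, S.toEquiv.symm^[k] x ∈ B)
    (hSx : S.toEquiv x ∉ B) : lastVisit S B (S.toEquiv x) = lastVisit S B x + 1 := by
  classical
  have hsucc : ∀ k, S.toEquiv.symm^[k + 1] (S.toEquiv x) = S.toEquiv.symm^[k] x := fun k => by
    rw [iterate_succ_apply, MeasurableEquiv.symm_apply_apply]
  have hx' : ¬∀ j, S.toEquiv.symm^[j] x ∉ B := fun h => hx.elim h
  have hSx' : ¬∀ j, S.toEquiv.symm^[j] (S.toEquiv x) ∉ B := fun h =>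
    hx' fun k => hsucc k ▸ h (k + 1)
  obtain ⟨k, hk⟩ := hx
  unfold lastVisit
  rw [Nat.find_comp_succ _ ⟨k, .inl (by rwa [hsucc])⟩ (by simpa [hSx] using hSx')]
  congr 1
  exact Nat.find_congr' fun {k} => by rw [hsucc, or_iff_left hSx', or_iff_left hx']

end LastVisit

section Glue

variable {Z ι : Type*} [MeasurableSpace Z] [MeasurableSpace ι] [Countable ι]
  [MeasurableSingletonClass ι] {h : Z → ι}

def MeasurableEquiv.glue (h : Z → ι) (hh : Measurable h) (e : ι → Z ≃ᵐ Z)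
    (he : ∀ i z, h (e i z) = h z) : Z ≃ᵐ Z where
  toFun z := e (h z) z
  invFun z := (e (h z)).symm z
  left_inv z := by simp only [he, MeasurableEquiv.symm_apply_apply]
  right_inv z := by
    have : h ((e (h z)).symm z) = h z := by
      simpa using (he (h z) ((e (h z)).symm z)).symm
    simp only [this, MeasurableEquiv.apply_symm_apply]
  measurable_toFun :=
    (measurable_from_prod_countable_left (f := fun q : Z × ι => e q.2 q.1)
      fun i => (e i).measurable).comp (measurable_id.prodMk hh)
  measurable_invFun :=
    (measurable_from_prod_countable_left (f := fun q : Z × ι => (e q.2).symm q.1)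
      fun i => (e i).symm.measurable).comp (measurable_id.prodMk hh)

@[simp]
theorem MeasurableEquiv.glue_apply (hh : Measurable h) (e : ι → Z ≃ᵐ Z)
    (he : ∀ i z, h (e i z) = h z) (z : Z) : glue h hh e he z = e (h z) z := rfl

@[simp]
theorem MeasurableEquiv.glue_symm_apply (hh : Measurable h) (e : ι → Z ≃ᵐ Z)
    (he : ∀ i z, h (e i z) = h z) (z : Z) : (glue h hh e he).symm z = (e (h z)).symm z := rfl

theorem measure_eq_tsum_inter_fiber {ν : Measure Z} (hh : Measurable h) {A : Set Z}
    (hA : MeasurableSet A) : ν A = ∑' i, ν (A ∩ h ⁻¹' {i}) := by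
  rw [← measure_iUnion (fun i j hij => (pairwise_disjoint_fiber h hij).mono inter_subset_right
    inter_subset_right) fun i => hA.inter (hh (measurableSet_singleton i)), ← inter_iUnion,
    ← preimage_iUnion, iUnion_of_singleton, preimage_univ, inter_univ]

theorem MeasurableEquiv.measurePreserving_glue {ν : Measure Z} (hh : Measurable h)
    {e : ι → Z ≃ᵐ Z} (he : ∀ i z, h (e i z) = h z) (hmp : ∀ i, MeasurePreserving (e i) ν ν) :
    MeasurePreserving (glue h hh e he) ν ν := by
  refine ⟨(glue h hh e he).measurable, Measure.ext fun A hA => ?_⟩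
  rw [Measure.map_apply (glue h hh e he).measurable hA,
    measure_eq_tsum_inter_fiber hh ((glue h hh e he).measurable hA),
    measure_eq_tsum_inter_fiber hh hA]
  refine tsum_congr fun i => ?_
  have hfiber : glue h hh e he ⁻¹' A ∩ h ⁻¹' {i} = e i ⁻¹' (A ∩ h ⁻¹' {i}) := by
    ext z
    simp only [mem_inter_iff, mem_preimage, mem_singleton_iff, glue_apply, he]
    constructor <;> rintro ⟨hz, rfl⟩ <;> exact ⟨hz, rfl⟩
  rw [hfiber,
    (hmp i).measure_preimage (hA.inter (hh (measurableSet_singleton i))).nullMeasurableSet]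

end Glue

section Intertwiner

variable {Z : Type*} [MeasurableSpace Z] {ν : Measure Z}

/-- `intertwiner R P k = Rᵏ ∘ P⁻ᵏ`. -/
def Aut.intertwiner (R P : Aut Z ν) : ℕ → Aut Z ν
  | 0 => Aut.id ν
  | k + 1 => R.comp ((Aut.intertwiner R P k).comp P.inv)

theorem Aut.intertwiner_succ_apply (R P : Aut Z ν) (k : ℕ) (z : Z) :
    (R.intertwiner P (k + 1)).toEquiv (P.toEquiv z) = R.toEquiv ((R.intertwiner P k).toEquiv z) :=
  congrArg (fun z => R.toEquiv ((R.intertwiner P k).toEquiv z)) (P.toEquiv.symm_apply_apply z)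

theorem Aut.apply_intertwiner_apply {Y : Type*} {π : Z → Y} {s : Y → Y} {R P : Aut Z ν}
    (hR : ∀ z, π (R.toEquiv z) = s (π z)) (hP : ∀ z, π (P.toEquiv z) = s (π z)) (k : ℕ)
    (z : Z) : π ((R.intertwiner P k).toEquiv z) = π z := by
  induction k generalizing z with
  | zero => rfl
  | succ k ih =>
    obtain ⟨w, rfl⟩ := P.toEquiv.surjective z
    rw [intertwiner_succ_apply, hR, ih, hP]

end Intertwiner

section Cohomology

variable {X : Type*} [MeasurableSpace X] {μ : Measure X}

theorem memJ_of_fst_apply {J : Aut (X × X) (μ.prod μ)} (hJ : ∀ z, (J.toEquiv z).1 = z.1) :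
    MemJ J := by
  refine fun A _ => subset_antisymm ?_ fun z hz =>
    ⟨J.toEquiv.symm z, ?_, J.toEquiv.apply_symm_apply z⟩
  · rintro - ⟨z, hz, rfl⟩
    exact ⟨(hJ z).symm ▸ hz.1, trivial⟩
  · have := hJ (J.toEquiv.symm z)
    rw [J.toEquiv.apply_symm_apply] at this
    exact ⟨this ▸ hz.1, trivial⟩

variable [SFinite μ] {S : Aut X μ} (E : SkewExt S) {B : Set X} (hB : MeasurableSet B)

theorem fst_intertwiner_prodId_apply (k : ℕ) (z : X × X) :
    ((E.prod.intertwiner (prodId S) k).toEquiv z).1 = z.1 :=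
  Aut.apply_intertwiner_apply (π := Prod.fst) (fun z => congrArg Prod.fst (E.spec z))
    (fun _ => rfl) k z

theorem fst_intertwiner_prodId_symm_apply (k : ℕ) (z : X × X) :
    ((E.prod.intertwiner (prodId S) k).toEquiv.symm z).1 = z.1 := by
  simpa using
    (fst_intertwiner_prodId_apply E k ((E.prod.intertwiner (prodId S) k).toEquiv.symm z)).symm

/-- The cohomology acting on the fibre over `x` by the inverse of the cocycle accumulated since
the last visit of the backward orbit of `x` to `B`. -/
noncomputable def towerCohomology : Aut (X × X) (μ.prod μ) :=
  ⟨.glue (fun z => lastVisit S B z.1) ((measurable_lastVisit hB).comp measurable_fst)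
      (fun k => (E.prod.intertwiner (prodId S) k).toEquiv.symm)
      fun k z => congrArg (lastVisit S B) (fst_intertwiner_prodId_symm_apply E k z),
    MeasurableEquiv.measurePreserving_glue _ _ fun k => (E.prod.intertwiner (prodId S) k).mp.symm _⟩

theorem memJ_towerCohomology : MemJ (towerCohomology E hB) :=
  memJ_of_fst_apply fun z => fst_intertwiner_prodId_symm_apply E _ z

theorem towerCohomology_conj_apply {z : X × X} (hz : ∃ k, S.toEquiv.symm^[k] z.1 ∈ B)
    (hSz : S.toEquiv z.1 ∉ B) :
    (towerCohomology E hB).toEquiv.symm ((prodId S).toEquiv ((towerCohomology E hB).toEquiv z)) =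
      E.prod.toEquiv z := by
  have hfst : ((prodId S).toEquiv
      ((E.prod.intertwiner (prodId S) (lastVisit S B z.1)).toEquiv.symm z)).1 = S.toEquiv z.1 :=
    congrArg S.toEquiv (fst_intertwiner_prodId_symm_apply E _ z)
  simp only [towerCohomology, MeasurableEquiv.glue_apply, MeasurableEquiv.glue_symm_apply,
    MeasurableEquiv.symm_symm]
  rw [hfst, lastVisit_apply_of_notMem hz hSz, Aut.intertwiner_succ_apply,
    MeasurableEquiv.apply_symm_apply]

theorem measure_setOf_towerCohomology_conj_ne_le [IsProbabilityMeasure μ] :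
    (μ.prod μ) {z | (towerCohomology E hB).toEquiv.symm
        ((prodId S).toEquiv ((towerCohomology E hB).toEquiv z)) ≠ E.prod.toEquiv z} ≤
      μ ({x | ¬∃ k, S.toEquiv.symm^[k] x ∈ B} ∪ S.toEquiv ⁻¹' B) := by
  rw [← mul_one (μ _), ← measure_univ (μ := μ), ← Measure.prod_prod]
  refine measure_mono fun z hz => ⟨?_, trivial⟩
  by_contra hz'
  simp only [mem_union, mem_ofPred_eq, mem_preimage, not_or, not_not] at hz'
  exact hz (towerCohomology_conj_apply E hB hz'.1 hz'.2)

end Cohomology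

/-- For an aperiodic `S`, the cohomology class of the trivial extension `S × Id`
is dense in `Ext(S)`: for every skew product `R` over `S` and `δ > 0` there is
`J ∈ 𝒥` with `μ⊗μ {z : J⁻¹(S × Id)J z ≠ R z} < δ`. -/
theorem cohomology_class_of_trivial_dense {X : Type*} [MeasurableSpace X] [StandardBorelSpace X]
    (μ : Measure X) [IsProbabilityMeasure μ] (S : Aut X μ)
    (hS : Aperiodic S) :
    ∀ E : SkewExt S, ∀ δ > (0 : ℝ), ∃ J : Aut (X × X) (μ.prod μ), MemJ J ∧
      (μ.prod μ) {z : X × X |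
        J.toEquiv.symm ((prodId S).toEquiv (J.toEquiv z)) ≠ E.prod.toEquiv z}
        < ENNReal.ofReal δ := by
  intro E δ hδ
  obtain ⟨n, hn⟩ := ENNReal.exists_inv_nat_lt (ENNReal.ofReal_pos.2 hδ).ne'
  have hn0 : 0 < n := Nat.pos_of_ne_zero fun h => by simp [h] at hn
  obtain ⟨B, ⟨hBm, hB⟩, hBsweep⟩ := exists_isTowerBase_measure_compl_sweep_eq_zero hS hn0
  refine ⟨towerCohomology E hBm, memJ_towerCohomology E hBm,
    (measure_setOf_towerCohomology_conj_ne_le E hBm).trans_lt ?_⟩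
  calc μ ({x | ¬∃ k, S.toEquiv.symm^[k] x ∈ B} ∪ S.toEquiv ⁻¹' B)
      ≤ 0 + μ B := by
        rw [← ae_iff.1 (ae_exists_iterate_symm_mem hBsweep),
          ← S.mp.measure_preimage hBm.nullMeasurableSet]
        exact measure_union_le _ _
    _ ≤ (n : ℝ≥0∞)⁻¹ := by
        rw [zero_add, ENNReal.le_inv_iff_mul_le, mul_comm]
        exact (hB.natCast_mul_measure_le hBm).trans_eq measure_univ
    _ < ENNReal.ofReal δ := hn
end

section
/- If S is an aperiodic automorphism of a standard probability space, then Rec(S) contains a dense G_δ subset of Ext(S); in particular recurrence is a typical (Baire-generic) property of extensions of S. -/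
open MeasureTheory Set

/-!
`Rec(S)` is itself a dense `G_δ`: it is the intersection, over `m` and `N`, of the sets of
extensions `R` for which some `n > N` has `μ {x | ρ(C(x,n,R), Id) < 1/m} > 0`.

Each of these sets is open. The automorphism `(S × Id)⁻ⁿ Rⁿ` of `X × X` depends continuously on
`R` in the weak topology and acts fibrewise by `C(x,n,R)`; by Tonelli and Markov's inequality the
fibres then depend continuously, in measure, on `R`.

For density, an aperiodic `S` has no atoms, so `X` contains sets `B` of arbitrarily small
positive measure. Post-composing the fibre map of `R` that lands over `u ∈ B` with the inverse of
the cocycle accumulated since the previous visit of the orbit of `u` to `B` moves `R` by at most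
`4 μ(B)`, and makes `C(x,n,R') = Id` whenever `x` and `Sⁿ x` lie in `B`; by Poincaré recurrence
this happens on a set of positive measure for arbitrarily large `n`.
-/

open Filter Topology ENNReal

namespace Aut

variable {Z : Type*} [MeasurableSpace Z] {ν : Measure Z}

@[ext]
theorem ext {a b : Aut Z ν} (h : ∀ z, a.toEquiv z = b.toEquiv z) : a = b := by
  obtain ⟨ea, _⟩ := a
  obtain ⟨eb, _⟩ := b
  obtain rfl : ea = eb := MeasurableEquiv.ext (funext h)
  rfl

instance : Group (Aut Z ν) where
  mul := comp
  one := Aut.id ν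
  inv := inv
  mul_assoc _ _ _ := rfl
  one_mul _ := rfl
  mul_one _ := rfl
  inv_mul_cancel a := ext a.toEquiv.symm_apply_apply

theorem id_eq_one : Aut.id ν = 1 := rfl

@[simp]
theorem mul_apply (a b : Aut Z ν) (z : Z) : (a * b).toEquiv z = a.toEquiv (b.toEquiv z) := rfl

@[simp]
theorem one_apply (z : Z) : (1 : Aut Z ν).toEquiv z = z := rfl

@[simp]
theorem inv_toEquiv (a : Aut Z ν) : a⁻¹.toEquiv = a.toEquiv.symm := rfl

theorem iterate_iterate_inv (a : Aut Z ν) (n : ℕ) (z : Z) :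
    a.toEquiv^[n] (a⁻¹.toEquiv^[n] z) = z :=
  (Function.LeftInverse.iterate a.toEquiv.apply_symm_apply n) z

theorem inv_iterate_iterate (a : Aut Z ν) {m n : ℕ} (h : m ≤ n) (z : Z) :
    a⁻¹.toEquiv^[m] (a.toEquiv^[n] z) = a.toEquiv^[n - m] z := by
  rw [← Nat.add_sub_cancel' h, Function.iterate_add_apply, Nat.add_sub_cancel_left]
  exact (Function.LeftInverse.iterate a.toEquiv.symm_apply_apply m) _

theorem image_mul (a b : Aut Z ν) (V : Set Z) :
    (a * b).toEquiv '' V = a.toEquiv '' (b.toEquiv '' V) := by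
  rw [Set.image_image]
  rfl

@[simp]
theorem image_one (V : Set Z) : (1 : Aut Z ν).toEquiv '' V = V :=
  image_id V

theorem measure_image (a : Aut Z ν) (V : Set Z) : ν (a.toEquiv '' V) = ν V := by
  rw [MeasurableEquiv.image_eq_preimage_symm]
  exact a⁻¹.mp.measure_preimage_equiv V

theorem measure_image_symmDiff (a : Aut Z ν) (U W : Set Z) :
    ν (symmDiff (a.toEquiv '' U) (a.toEquiv '' W)) = ν (symmDiff U W) := by
  rw [← Set.image_symmDiff a.toEquiv.injective, measure_image]

theorem symmDiff_image_subset {g : Aut Z ν} {K : Set Z}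
    (hK : ∀ z ∉ K, g.toEquiv z = z ∧ g⁻¹.toEquiv z = z) (W : Set Z) :
    symmDiff W (g.toEquiv '' W) ⊆ K := by
  intro z hz
  by_contra hzK
  obtain ⟨hgz, hgz'⟩ := hK z hzK
  rcases hz with ⟨hzW, hzg⟩ | ⟨⟨w, hw, rfl⟩, hzW⟩
  · exact hzg ⟨z, hzW, hgz⟩
  · rw [inv_toEquiv, MeasurableEquiv.symm_apply_apply] at hgz'
    exact hzW (hgz' ▸ hw)

noncomputable def imageDiff (V : Set Z) (a b : Aut Z ν) : ℝ≥0∞ :=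
  ν (symmDiff (a.toEquiv '' V) (b.toEquiv '' V))

theorem imageDiff_comm (V : Set Z) (a b : Aut Z ν) : imageDiff V a b = imageDiff V b a := by
  rw [imageDiff, imageDiff, symmDiff_comm]

@[simp]
theorem imageDiff_self (V : Set Z) (a : Aut Z ν) : imageDiff V a a = 0 := by
  simp [imageDiff]

theorem imageDiff_triangle (V : Set Z) (a b c : Aut Z ν) :
    imageDiff V a c ≤ imageDiff V a b + imageDiff V b c :=
  measure_symmDiff_le _ _ _

theorem imageDiff_mul_left (V : Set Z) (g a b : Aut Z ν) :
    imageDiff V (g * a) (g * b) = imageDiff V a b := by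
  rw [imageDiff, image_mul, image_mul, measure_image_symmDiff]
  rfl

theorem imageDiff_mul_le (V : Set Z) (a a' b b' : Aut Z ν) :
    imageDiff V (a * a') (b * b') ≤ imageDiff (a'.toEquiv '' V) a b + imageDiff V a' b' := by
  calc imageDiff V (a * a') (b * b')
      ≤ imageDiff V (a * a') (b * a') + imageDiff V (b * a') (b * b') := imageDiff_triangle ..
    _ = imageDiff (a'.toEquiv '' V) a b + imageDiff V a' b' := by
      rw [imageDiff_mul_left]
      simp only [imageDiff, image_mul]

theorem imageDiff_inv (V : Set Z) (a b : Aut Z ν) :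
    imageDiff V a⁻¹ b⁻¹ = imageDiff (a⁻¹.toEquiv '' V) b a := by
  rw [← imageDiff_mul_left V b, mul_inv_cancel, ← mul_inv_cancel a]
  simp only [imageDiff, image_mul]

end Aut

section Halmos

variable {Z : Type*} [MeasurableSpace Z] {ν : Measure Z} (A : ℕ → Set Z)

noncomputable def halmosTerm (a b : Aut Z ν) (i : ℕ) : ℝ :=
  (1 / 2) ^ i * ((Aut.imageDiff (A i) a b).toReal + (Aut.imageDiff (A i) a⁻¹ b⁻¹).toReal)

theorem halmos_eq_tsum (a b : Aut Z ν) : halmos A a b = ∑' i, halmosTerm A a b i := rfl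

theorem halmosTerm_nonneg (a b : Aut Z ν) (i : ℕ) : 0 ≤ halmosTerm A a b i := by
  unfold halmosTerm
  positivity

theorem halmos_nonneg (a b : Aut Z ν) : 0 ≤ halmos A a b :=
  tsum_nonneg (halmosTerm_nonneg A a b)

theorem halmos_self (a : Aut Z ν) : halmos A a a = 0 := by
  simp [halmos_eq_tsum, halmosTerm]

theorem halmos_comm (a b : Aut Z ν) : halmos A a b = halmos A b a := by
  simp only [halmos_eq_tsum, halmosTerm, Aut.imageDiff_comm _ a, Aut.imageDiff_comm _ a⁻¹]

variable [IsProbabilityMeasure ν]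

theorem halmosTerm_le (a b : Aut Z ν) (i : ℕ) : halmosTerm A a b i ≤ 2 * (1 / 2) ^ i := by
  have h (c d : Aut Z ν) : (Aut.imageDiff (A i) c d).toReal ≤ 1 :=
    ENNReal.toReal_le_of_le_ofReal zero_le_one (by rw [ENNReal.ofReal_one]; exact prob_le_one)
  unfold halmosTerm
  nlinarith [h a b, h a⁻¹ b⁻¹, pow_pos (one_half_pos (α := ℝ)) i]

theorem summable_halmosTerm (a b : Aut Z ν) : Summable (halmosTerm A a b) :=
  .of_nonneg_of_le (halmosTerm_nonneg A a b) (halmosTerm_le A a b)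
    (summable_geometric_two.mul_left 2)

theorem halmos_triangle (a b c : Aut Z ν) : halmos A a c ≤ halmos A a b + halmos A b c := by
  simp only [halmos_eq_tsum]
  rw [← (summable_halmosTerm A a b).tsum_add (summable_halmosTerm A b c)]
  refine (summable_halmosTerm A a c).tsum_le_tsum (fun i => ?_)
    ((summable_halmosTerm A a b).add (summable_halmosTerm A b c))
  have h (V : Set Z) (a b c : Aut Z ν) : (Aut.imageDiff V a c).toReal ≤
      (Aut.imageDiff V a b).toReal + (Aut.imageDiff V b c).toReal :=
    ENNReal.toReal_le_add (Aut.imageDiff_triangle V a b c) (measure_ne_top _ _)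
      (measure_ne_top _ _)
  simp only [halmosTerm, ← mul_add]
  refine mul_le_mul_of_nonneg_left ?_ (by positivity)
  linarith [h (A i) a b c, h (A i) a⁻¹ b⁻¹ c⁻¹]

theorem pow_mul_imageDiff_le_halmos (a b : Aut Z ν) (i : ℕ) :
    (1 / 2) ^ i * (Aut.imageDiff (A i) a b).toReal ≤ halmos A a b := by
  refine le_trans ?_ ((summable_halmosTerm A a b).le_tsum i fun j _ => halmosTerm_nonneg A a b j)
  unfold halmosTerm
  gcongr
  exact le_add_of_nonneg_right ENNReal.toReal_nonneg

theorem halmos_le_of_imageDiff_le {a b : Aut Z ν} {β : ℝ} (hβ : 0 ≤ β) (I : ℕ)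
    (h : ∀ i < I, Aut.imageDiff (A i) a b ≤ .ofReal β ∧ Aut.imageDiff (A i) a⁻¹ b⁻¹ ≤ .ofReal β) :
    halmos A a b ≤ 4 * β + 4 * (1 / 2) ^ I := by
  rw [halmos_eq_tsum, ← (summable_halmosTerm A a b).sum_add_tsum_nat_add I]
  gcongr
  · calc ∑ i ∈ Finset.range I, halmosTerm A a b i
        ≤ ∑ i ∈ Finset.range I, 2 * β * (1 / 2) ^ i := by
          refine Finset.sum_le_sum fun i hi => ?_
          obtain ⟨h₁, h₂⟩ := h i (Finset.mem_range.1 hi)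
          have := ENNReal.toReal_le_of_le_ofReal hβ h₁
          have := ENNReal.toReal_le_of_le_ofReal hβ h₂
          unfold halmosTerm
          nlinarith [pow_pos (one_half_pos (α := ℝ)) i]
      _ ≤ 4 * β := by
          rw [← Finset.mul_sum]
          nlinarith [sum_geometric_two_le I]
  · calc ∑' i, halmosTerm A a b (i + I)
        ≤ ∑' i, 2 * (1 / 2) ^ I * (1 / 2) ^ i := by
          refine ((summable_halmosTerm A a b).comp_injective (add_left_injective I)).tsum_le_tsum
            (fun i => (halmosTerm_le A a b _).trans_eq (by ring))
            (summable_geometric_two.mul_left _)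
      _ = 4 * (1 / 2) ^ I := by rw [tsum_mul_left, tsum_geometric_two]; ring

theorem halmos_le_of_forall_imageDiff_le {a b : Aut Z ν} {β : ℝ} (hβ : 0 ≤ β)
    (h : ∀ i, Aut.imageDiff (A i) a b ≤ .ofReal β ∧ Aut.imageDiff (A i) a⁻¹ b⁻¹ ≤ .ofReal β) :
    halmos A a b ≤ 4 * β := by
  have hlim : Tendsto (fun I : ℕ => 4 * β + 4 * (1 / 2 : ℝ) ^ I) atTop (𝓝 (4 * β + 4 * 0)) :=
    tendsto_const_nhds.add <| tendsto_const_nhds.mul <|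
      tendsto_pow_atTop_nhds_zero_of_lt_one (by norm_num) one_half_lt_one
  rw [mul_zero, add_zero] at hlim
  exact ge_of_tendsto' hlim fun I => halmos_le_of_imageDiff_le A hβ I fun i _ => h i

theorem halmos_mul_left_le {g : Aut Z ν} {K : Set Z}
    (hK : ∀ z ∉ K, g.toEquiv z = z ∧ g⁻¹.toEquiv z = z) (a : Aut Z ν) :
    halmos A a (g * a) ≤ 4 * (ν K).toReal := by
  have hK' : ∀ z ∉ K, g⁻¹.toEquiv z = z ∧ g⁻¹⁻¹.toEquiv z = z := fun z hz =>
    (inv_inv g).symm ▸ (hK z hz).symm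
  refine halmos_le_of_forall_imageDiff_le A ENNReal.toReal_nonneg fun i => ?_
  rw [ENNReal.ofReal_toReal (measure_ne_top _ _)]
  constructor
  · exact measure_mono (by simpa only [Aut.image_mul] using Aut.symmDiff_image_subset hK _)
  · calc Aut.imageDiff (A i) a⁻¹ (g * a)⁻¹ = Aut.imageDiff (A i) 1 g⁻¹ := by
          rw [mul_inv_rev, ← Aut.imageDiff_mul_left (A i) a⁻¹ 1 g⁻¹, mul_one]
      _ ≤ ν K := measure_mono (by
          simpa only [Aut.imageDiff, Aut.image_one] using Aut.symmDiff_image_subset hK' (A i))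

end Halmos

section WeakConvergence

variable {Y Z : Type*} [MeasurableSpace Z] {ν : Measure Z}

/-- Convergence in the weak topology of `Aut Z ν`. -/
def TendstoWeakly (Φ : Y → Aut Z ν) (l : Filter Y) (a : Aut Z ν) : Prop :=
  ∀ V, MeasurableSet V → Tendsto (fun y => Aut.imageDiff V a (Φ y)) l (𝓝 0)

theorem tendstoWeakly_const (l : Filter Y) (a : Aut Z ν) : TendstoWeakly (fun _ => a) l a :=
  fun _ _ => by simpa using tendsto_const_nhds

variable {Φ Ψ : Y → Aut Z ν} {l : Filter Y} {a b : Aut Z ν}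

theorem TendstoWeakly.mul (hΦ : TendstoWeakly Φ l a) (hΨ : TendstoWeakly Ψ l b) :
    TendstoWeakly (fun y => Φ y * Ψ y) l (a * b) := fun V hV => by
  have hsum := (hΦ _ (b.toEquiv.measurableSet_image.2 hV)).add (hΨ V hV)
  rw [add_zero] at hsum
  exact tendsto_of_tendsto_of_tendsto_of_le_of_le tendsto_const_nhds hsum (fun _ => zero_le)
    fun y => Aut.imageDiff_mul_le V a b (Φ y) (Ψ y)

theorem TendstoWeakly.pow (hΦ : TendstoWeakly Φ l a) (n : ℕ) :
    TendstoWeakly (fun y => Φ y ^ n) l (a ^ n) := by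
  induction n with
  | zero => simpa only [pow_zero] using tendstoWeakly_const l 1
  | succ n ih => simpa only [pow_succ] using ih.mul hΦ

theorem TendstoWeakly.inv (hΦ : TendstoWeakly Φ l a) :
    TendstoWeakly (fun y => (Φ y)⁻¹) l a⁻¹ := fun V hV => by
  simp only [Aut.imageDiff_inv V a, Aut.imageDiff_comm _ (Φ _)]
  exact hΦ _ (a⁻¹.toEquiv.measurableSet_image.2 hV)

theorem TendstoWeakly.of_halmos [IsProbabilityMeasure ν] {A : ℕ → Set Z}
    (hA : ∀ V : Set Z, MeasurableSet V → ∀ ε > (0 : ℝ),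
      ∃ i, ν (symmDiff V (A i)) < ENNReal.ofReal ε)
    (h : Tendsto (fun y => halmos A a (Φ y)) l (𝓝 0)) : TendstoWeakly Φ l a := by
  intro V hV
  refine ENNReal.tendsto_nhds_zero.2 fun ε hε => ?_
  rcases eq_or_ne ε ⊤ with rfl | hε_top
  · exact Eventually.of_forall fun _ => le_top
  set δ := ε.toReal / 3 with hδ
  have hδ_pos : 0 < δ := div_pos (ENNReal.toReal_pos hε.ne' hε_top) three_pos
  obtain ⟨j, hj⟩ := hA V hV δ hδ_pos
  filter_upwards [h.eventually (gt_mem_nhds (by positivity : (0 : ℝ) < (1 / 2) ^ j * δ))]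
    with y hy
  have hAj : Aut.imageDiff (A j) a (Φ y) < ENNReal.ofReal δ :=
    (ENNReal.lt_ofReal_iff_toReal_lt (measure_ne_top _ _)).2 <| lt_of_mul_lt_mul_left
      ((pow_mul_imageDiff_le_halmos A a (Φ y) j).trans_lt hy) (by positivity)
  calc Aut.imageDiff V a (Φ y)
      ≤ ν (symmDiff (a.toEquiv '' V) (a.toEquiv '' A j)) + Aut.imageDiff (A j) a (Φ y)
          + ν (symmDiff ((Φ y).toEquiv '' A j) ((Φ y).toEquiv '' V)) :=
        (measure_symmDiff_le _ ((Φ y).toEquiv '' A j) _).trans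
          (add_le_add_left (measure_symmDiff_le _ _ _) _)
    _ ≤ ENNReal.ofReal δ + ENNReal.ofReal δ + ENNReal.ofReal δ := by
        rw [Aut.measure_image_symmDiff, Aut.measure_image_symmDiff, symmDiff_comm (A j)]
        gcongr
    _ = ε := by
        rw [← ENNReal.ofReal_add hδ_pos.le hδ_pos.le, ← ENNReal.ofReal_add (by positivity)
          hδ_pos.le, hδ, _root_.add_thirds, ENNReal.ofReal_toReal hε_top]

end WeakConvergence

section Fiberwise

variable {Y X Z : Type*} [MeasurableSpace X] [MeasurableSpace Z] {μ : Measure X} {ν : Measure Z}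

def IsFiberwise (Φ : Aut (X × Z) (μ.prod ν)) (φ : X → Aut Z ν) : Prop :=
  ∀ x z, Φ.toEquiv (x, z) = (x, (φ x).toEquiv z)

noncomputable def Aut.ofFiberwise [SFinite ν] (φ : X → Aut Z ν)
    (hφ : Measurable fun p : X × Z => (φ p.1).toEquiv p.2)
    (hφ_inv : Measurable fun p : X × Z => (φ p.1).toEquiv.symm p.2) : Aut (X × Z) (μ.prod ν) where
  toEquiv :=
    { toFun p := (p.1, (φ p.1).toEquiv p.2)
      invFun p := (p.1, (φ p.1).toEquiv.symm p.2)
      left_inv p := Prod.ext rfl ((φ p.1).toEquiv.symm_apply_apply p.2)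
      right_inv p := Prod.ext rfl ((φ p.1).toEquiv.apply_symm_apply p.2)
      measurable_toFun := measurable_fst.prodMk hφ
      measurable_invFun := measurable_fst.prodMk hφ_inv }
  mp := by
    refine ⟨measurable_fst.prodMk hφ, Measure.ext fun M hM => ?_⟩
    rw [MeasurableEquiv.map_apply]
    refine (Measure.prod_apply (measurable_fst.prodMk hφ hM)).trans ?_
    rw [Measure.prod_apply hM]
    exact lintegral_congr fun x => (φ x).mp.measure_preimage_equiv (Prod.mk x ⁻¹' M)

theorem Aut.isFiberwise_ofFiberwise [SFinite ν] (φ : X → Aut Z ν) (hφ) (hφ_inv) :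
    IsFiberwise (Aut.ofFiberwise (μ := μ) φ hφ hφ_inv) φ := fun _ _ => rfl

variable {Φ Ψ : Aut (X × Z) (μ.prod ν)} {φ ψ : X → Aut Z ν}

theorem IsFiberwise.inv (h : IsFiberwise Φ φ) : IsFiberwise Φ⁻¹ fun x => (φ x)⁻¹ := by
  intro x z
  rw [Aut.inv_toEquiv, MeasurableEquiv.symm_apply_eq, h]
  simp

theorem IsFiberwise.measurable_glue {Φ : ℕ → Aut (X × Z) (μ.prod ν)} {φ : ℕ → X → Aut Z ν}
    (hΦ : ∀ s, IsFiberwise (Φ s) (φ s)) {r : X → ℕ} (hr : Measurable r) :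
    Measurable fun p : X × Z => (φ (r p.1) p.1).toEquiv p.2 := by
  have h : Measurable fun q : (X × Z) × ℕ => ((Φ q.2).toEquiv q.1).2 :=
    measurable_from_prod_countable_left fun s => measurable_snd.comp (Φ s).toEquiv.measurable
  convert h.comp (measurable_id.prodMk (hr.comp measurable_fst)) using 1
  ext p
  simp [hΦ _ p.1 p.2]

theorem IsFiberwise.preimage_mk_image (h : IsFiberwise Φ φ) (x : X) (V : Set Z) :
    Prod.mk x ⁻¹' (Φ.toEquiv '' (univ ×ˢ V)) = (φ x).toEquiv '' V := by
  ext z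
  simp only [MeasurableEquiv.image_eq_preimage_symm, mem_preimage, ← Aut.inv_toEquiv, h.inv x z,
    mem_prod, mem_univ, true_and]

theorem IsFiberwise.imageDiff_prod [SFinite ν] (hΦ : IsFiberwise Φ φ) (hΨ : IsFiberwise Ψ ψ)
    {V : Set Z} (hV : MeasurableSet V) :
    Aut.imageDiff (univ ×ˢ V) Φ Ψ = ∫⁻ x, Aut.imageDiff V (φ x) (ψ x) ∂μ := by
  have hW := (Φ.toEquiv.measurableSet_image.2 (MeasurableSet.univ.prod hV)).symmDiff
    (Ψ.toEquiv.measurableSet_image.2 (MeasurableSet.univ.prod hV))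
  rw [Aut.imageDiff, Measure.prod_apply hW]
  simp only [preimage_symmDiff, hΦ.preimage_mk_image, hΨ.preimage_mk_image, Aut.imageDiff]

theorem IsFiberwise.measure_le_imageDiff_le [SFinite ν] (hΦ : IsFiberwise Φ φ)
    (hΨ : IsFiberwise Ψ ψ) {V : Set Z} (hV : MeasurableSet V) {β : ℝ≥0∞} (hβ : β ≠ 0)
    (hβ_top : β ≠ ∞) :
    μ {x | β ≤ Aut.imageDiff V (φ x) (ψ x)} ≤ Aut.imageDiff (univ ×ˢ V) Φ Ψ / β := by
  have hW := (Φ.toEquiv.measurableSet_image.2 (MeasurableSet.univ.prod hV)).symmDiff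
    (Ψ.toEquiv.measurableSet_image.2 (MeasurableSet.univ.prod hV))
  have hmeas : Measurable fun x => Aut.imageDiff V (φ x) (ψ x) := by
    simpa only [preimage_symmDiff, hΦ.preimage_mk_image, hΨ.preimage_mk_image, Aut.imageDiff]
      using measurable_measure_prodMk_left (ν := ν) hW
  rw [hΦ.imageDiff_prod hΨ hV]
  exact meas_ge_le_lintegral_div hmeas.aemeasurable hβ hβ_top

variable {l : Filter Y} {Φ : Y → Aut (X × Z) (μ.prod ν)} {φ : Y → X → Aut Z ν}
  {Φ₀ : Aut (X × Z) (μ.prod ν)} {φ₀ : X → Aut Z ν}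

theorem tendsto_measure_le_imageDiff [SFinite ν] (hΦ : ∀ y, IsFiberwise (Φ y) (φ y))
    (hΦ₀ : IsFiberwise Φ₀ φ₀) (h : TendstoWeakly Φ l Φ₀) {V : Set Z} (hV : MeasurableSet V)
    {β : ℝ≥0∞} (hβ : β ≠ 0) (hβ_top : β ≠ ∞) :
    Tendsto (fun y => μ {x | β ≤ Aut.imageDiff V (φ₀ x) (φ y x)}) l (𝓝 0) := by
  have hlim := ENNReal.Tendsto.div_const (h _ (MeasurableSet.univ.prod hV)) (Or.inr hβ)
  rw [ENNReal.zero_div] at hlim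
  exact tendsto_of_tendsto_of_tendsto_of_le_of_le tendsto_const_nhds hlim (fun _ => zero_le)
    fun y => hΦ₀.measure_le_imageDiff_le (hΦ y) hV hβ hβ_top

theorem tendsto_measure_le_halmos [IsProbabilityMeasure ν] (hΦ : ∀ y, IsFiberwise (Φ y) (φ y))
    (hΦ₀ : IsFiberwise Φ₀ φ₀) (h : TendstoWeakly Φ l Φ₀) {A : ℕ → Set Z}
    (hA : ∀ i, MeasurableSet (A i)) {θ : ℝ} (hθ : 0 < θ) :
    Tendsto (fun y => μ {x | θ ≤ halmos A (φ₀ x) (φ y x)}) l (𝓝 0) := by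
  obtain ⟨I, hI⟩ := exists_pow_lt_of_lt_one (show 0 < θ / 8 by positivity) one_half_lt_one
  have hβ : ENNReal.ofReal (θ / 8) ≠ 0 := by simpa using hθ
  let bad (i : ℕ) (y : Y) : Set X :=
    {x | .ofReal (θ / 8) ≤ Aut.imageDiff (A i) (φ₀ x) (φ y x)} ∪
      {x | .ofReal (θ / 8) ≤ Aut.imageDiff (A i) (φ₀ x)⁻¹ (φ y x)⁻¹}
  have hsub (y : Y) : {x | θ ≤ halmos A (φ₀ x) (φ y x)} ⊆ ⋃ i ∈ Finset.range I, bad i y := by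
    intro x hx
    by_contra hx'
    simp only [bad, mem_iUnion, mem_union, mem_ofPred_eq, Finset.mem_range, not_exists,
      not_or, not_le] at hx'
    have := halmos_le_of_imageDiff_le A (by positivity : 0 ≤ θ / 8) I
      fun i hi => ⟨(hx' i hi).1.le, (hx' i hi).2.le⟩
    linarith [mem_ofPred_eq ▸ hx]
  have hbad (i : ℕ) : Tendsto (fun y => μ (bad i y)) l (𝓝 0) := by
    have hsum := (tendsto_measure_le_imageDiff hΦ hΦ₀ h (hA i) hβ ofReal_ne_top).add
      (tendsto_measure_le_imageDiff (fun y => (hΦ y).inv) hΦ₀.inv h.inv (hA i) hβ ofReal_ne_top)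
    rw [add_zero] at hsum
    exact tendsto_of_tendsto_of_tendsto_of_le_of_le tendsto_const_nhds hsum (fun _ => zero_le)
      fun y => measure_union_le _ _
  have htotal := tendsto_finsetSum (Finset.range I) fun i _ => hbad i
  rw [Finset.sum_const_zero] at htotal
  exact tendsto_of_tendsto_of_tendsto_of_le_of_le tendsto_const_nhds htotal (fun _ => zero_le)
    fun y => (measure_mono (hsub y)).trans (measure_biUnion_finset_le _ _)

end Fiberwise

theorem exists_forall_lt_of_eventually_comap {Y : Type*} {f : Y → ℝ} (hf : ∀ y, 0 ≤ f y)
    {p : Y → Prop} (h : ∀ᶠ y in comap f (𝓝 0), p y) : ∃ ε > 0, ∀ y, f y < ε → p y := by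
  obtain ⟨ε, hε, h⟩ := Metric.eventually_nhds_iff.1 (eventually_comap.1 h)
  exact ⟨ε, hε, fun y hy => h (by rwa [Real.dist_0_eq_abs, abs_of_nonneg (hf y)]) y rfl⟩

section SkewProduct

variable {X : Type*} [MeasurableSpace X] {μ : Measure X} {S : Aut X μ}

theorem cocycle_add (T : X → Aut X μ) (x : X) (a b : ℕ) :
    cocycle S T x (a + b) = cocycle S T (S.toEquiv^[a] x) b * cocycle S T x a := by
  induction b with
  | zero => exact (one_mul _).symm
  | succ b ih =>
    rw [← add_assoc, cocycle, ih, cocycle, ← Function.iterate_add_apply, add_comm b a]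
    rfl

theorem SkewExt.prod_pow_apply (E : SkewExt S) (n : ℕ) (x y : X) :
    (E.prod ^ n).toEquiv (x, y) = (S.toEquiv^[n] x, (cocycle S E.T x n).toEquiv y) := by
  induction n with
  | zero => rfl
  | succ n ih =>
    rw [pow_succ', Aut.mul_apply, ih, E.spec, Function.iterate_succ_apply']
    rfl

theorem prodId_pow_apply [SFinite μ] (n : ℕ) (x y : X) :
    (prodId S ^ n).toEquiv (x, y) = (S.toEquiv^[n] x, y) := by
  induction n with
  | zero => rfl
  | succ n ih =>
    rw [pow_succ', Aut.mul_apply, ih, Function.iterate_succ_apply']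
    rfl

noncomputable def SkewExt.cocycleAut [SFinite μ] (E : SkewExt S) (n : ℕ) :
    Aut (X × X) (μ.prod μ) :=
  (prodId S ^ n)⁻¹ * E.prod ^ n

theorem SkewExt.isFiberwise_cocycleAut [SFinite μ] (E : SkewExt S) (n : ℕ) :
    IsFiberwise (E.cocycleAut n) fun x => cocycle S E.T x n := by
  intro x y
  rw [SkewExt.cocycleAut, Aut.mul_apply, E.prod_pow_apply, Aut.inv_toEquiv,
    MeasurableEquiv.symm_apply_eq, prodId_pow_apply]

variable [IsProbabilityMeasure μ] {A₂ : ℕ → Set (X × X)} {A : ℕ → Set X}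

theorem tendsto_measure_le_halmos_cocycle
    (hA₂ : ∀ V : Set (X × X), MeasurableSet V → ∀ ε > (0 : ℝ),
      ∃ i, (μ.prod μ) (symmDiff V (A₂ i)) < ENNReal.ofReal ε)
    (hA : ∀ i, MeasurableSet (A i)) (E : SkewExt S) (n : ℕ) {θ : ℝ} (hθ : 0 < θ) :
    Tendsto (fun F : SkewExt S => μ {x | θ ≤ halmos A (cocycle S E.T x n) (cocycle S F.T x n)})
      (comap (fun F : SkewExt S => halmos A₂ E.prod F.prod) (𝓝 0)) (𝓝 0) :=
  tendsto_measure_le_halmos (fun F => F.isFiberwise_cocycleAut n) (E.isFiberwise_cocycleAut n)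
    ((tendstoWeakly_const _ _).mul ((TendstoWeakly.of_halmos hA₂ tendsto_comap).pow n)) hA hθ

theorem isOpenWrt_setOf_measure_halmos_cocycle_lt_pos
    (hA₂ : ∀ V : Set (X × X), MeasurableSet V → ∀ ε > (0 : ℝ),
      ∃ i, (μ.prod μ) (symmDiff V (A₂ i)) < ENNReal.ofReal ε)
    (hA : ∀ i, MeasurableSet (A i)) (n : ℕ) (θ : ℝ) :
    IsOpenWrt (fun E F : SkewExt S => halmos A₂ E.prod F.prod)
      {E | 0 < μ {x | halmos A (cocycle S E.T x n) 1 < θ}} := by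
  intro E hE
  set f := fun x => halmos A (cocycle S E.T x n) 1
  -- Shrink `θ` a little, keeping a set of positive measure, to leave room for the perturbation.
  obtain ⟨δ, hδ, hW⟩ : ∃ δ > (0 : ℝ), 0 < μ {x | f x + δ < θ} := by
    by_contra! h
    refine hE.ne' (measure_mono_null (fun x (hx : f x < θ) => ?_) (measure_iUnion_null
      fun k : ℕ => nonpos_iff_eq_zero.1 (h (1 / (k + 1)) Nat.one_div_pos_of_nat)))
    obtain ⟨k, hk⟩ := exists_nat_one_div_lt (sub_pos.2 hx)
    exact mem_iUnion.2 ⟨k, lt_sub_iff_add_lt'.1 hk⟩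
  refine exists_forall_lt_of_eventually_comap (f := fun F : SkewExt S => halmos A₂ E.prod F.prod)
    (p := fun F => 0 < μ {x | halmos A (cocycle S F.T x n) 1 < θ})
    (fun F => halmos_nonneg A₂ E.prod F.prod) ?_
  filter_upwards [(tendsto_measure_le_halmos_cocycle hA₂ hA E n hδ).eventually
    (gt_mem_nhds hW)] with F hF
  refine (tsub_pos_of_lt hF).trans_le (le_measure_sdiff.trans (measure_mono fun x hx => ?_))
  obtain ⟨hxW, hxF⟩ := hx
  simp only [mem_ofPred_eq, not_le] at hxW hxF ⊢
  linarith [halmos_triangle A (cocycle S F.T x n) (cocycle S E.T x n) 1,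
    halmos_comm A (cocycle S F.T x n) (cocycle S E.T x n)]

end SkewProduct

section SmallSets

variable {X : Type*} [MeasurableSpace X] {μ : Measure X}

theorem Aperiodic.measure_singleton [MeasurableSingletonClass X] [IsFiniteMeasure μ]
    {S : Aut X μ} (hS : Aperiodic S) (a : X) : μ {a} = 0 := by
  by_contra h
  obtain ⟨n, hn, hne⟩ := S.mp.conservative.exists_gt_measure_inter_ne_zero
    (measurableSet_singleton a).nullMeasurableSet h 0
  obtain ⟨b, rfl, hb⟩ := nonempty_of_measure_ne_zero hne
  have hper : {b} ⊆ {x | S.toEquiv^[n] x = x} := singleton_subset_iff.2 hb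
  exact h (measure_mono_null hper (hS n hn))

theorem exists_measurableSet_measure_pos_lt [StandardBorelSpace X] [IsFiniteMeasure μ]
    [NeZero μ] [NullSingletonClass μ] {ε : ℝ≥0∞} (hε : ε ≠ 0) :
    ∃ B, MeasurableSet B ∧ 0 < μ B ∧ μ B < ε := by
  by_contra! h
  -- Otherwise, transported to `ℝ`, every point has a null neighbourhood: a small closed ball,
  -- whose measure is `< ε` as the measure has no atoms.
  obtain ⟨f, hf⟩ := exists_measurableEmbedding_real X
  have hnull (t : ℝ) : ∃ u ∈ 𝓝 t, μ.map f u = 0 := by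
    have hlim := tendsto_measure_cthickening_of_isClosed (μ := μ.map f)
      ⟨1, one_pos, measure_ne_top _ _⟩ (isClosed_singleton (x := t))
    rw [hf.map_apply, (subsingleton_singleton.preimage hf.injective).measure_zero] at hlim
    obtain ⟨δ, hδ, hsmall⟩ := Metric.eventually_nhds_iff.1
      (hlim.eventually (gt_mem_nhds (pos_iff_ne_zero.2 hε)))
    have hball := hsmall (show dist (δ / 2) 0 < δ by
      rw [Real.dist_0_eq_abs, abs_of_pos (half_pos hδ)]
      exact half_lt_self hδ)
    rw [Metric.cthickening_singleton _ (half_pos hδ).le, hf.map_apply] at hball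
    refine ⟨_, Metric.closedBall_mem_nhds t (half_pos hδ), ?_⟩
    rw [hf.map_apply]
    by_contra hpos
    exact (h _ (hf.measurable Metric.isClosed_closedBall.measurableSet)
      (pos_iff_ne_zero.2 hpos)).not_gt hball
  have huniv := measure_null_of_locally_null (μ := μ.map f) univ fun t _ =>
    (hnull t).imp fun u hu => ⟨mem_nhdsWithin_of_mem_nhds hu.1, hu.2⟩
  rw [hf.map_apply, preimage_univ, Measure.measure_univ_eq_zero] at huniv
  exact NeZero.ne μ huniv

end SmallSets

section Perturbation

open Classical

variable {X : Type*} [MeasurableSpace X] {μ : Measure X} {S : Aut X μ} {B : Set X}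

theorem exists_backwardReturnTime (S : Aut X μ) (B : Set X) (u : X) :
    ∃ s, (u ∈ B ∧ ∃ t, 0 < t ∧ S⁻¹.toEquiv^[t] u ∈ B) → 0 < s ∧ S⁻¹.toEquiv^[s] u ∈ B := by
  by_cases h : u ∈ B ∧ ∃ t, 0 < t ∧ S⁻¹.toEquiv^[t] u ∈ B
  · exact h.2.imp fun s hs _ => hs
  · exact ⟨0, fun h' => absurd h' h⟩

/-- For `u ∈ B`, the least `s > 0` with `S⁻ˢ u ∈ B`; it is `0` if `u ∉ B` or if there is no such
`s`. -/
noncomputable def backwardReturnTime (S : Aut X μ) (B : Set X) (u : X) : ℕ :=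
  Nat.find (exists_backwardReturnTime S B u)

theorem backwardReturnTime_of_notMem {u : X} (hu : u ∉ B) : backwardReturnTime S B u = 0 :=
  (Nat.find_eq_zero _).2 fun h => absurd h.1 hu

theorem backwardReturnTime_iterate {x : X} {d : ℕ} (hx : x ∈ B) (hd : 0 < d)
    (hdB : S.toEquiv^[d] x ∈ B) (hmid : ∀ t, 0 < t → t < d → S.toEquiv^[t] x ∉ B) :
    backwardReturnTime S B (S.toEquiv^[d] x) = d := by
  have hback : S⁻¹.toEquiv^[d] (S.toEquiv^[d] x) ∈ B := by
    rwa [S.inv_iterate_iterate le_rfl, Nat.sub_self]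
  refine (Nat.find_eq_iff _).2 ⟨fun _ => ⟨hd, hback⟩, fun n hn h => ?_⟩
  obtain ⟨hn0, hnB⟩ := h ⟨hdB, d, hd, hback⟩
  rw [S.inv_iterate_iterate hn.le] at hnB
  exact hmid (d - n) (by omega) (by omega) hnB

theorem measurable_backwardReturnTime (hB : MeasurableSet B) :
    Measurable (backwardReturnTime S B) := by
  refine measurable_find _ fun s => ?_
  have h (t : ℕ) : MeasurableSet {u | S⁻¹.toEquiv^[t] u ∈ B} :=
    S⁻¹.toEquiv.measurable.iterate t hB
  measurability

namespace SkewExt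

/-- Undoes the cocycle accumulated along the excursion outside `B` that ends at `u`. -/
noncomputable def correction (E : SkewExt S) (B : Set X) (u : X) : Aut X μ :=
  (cocycle S E.T (S⁻¹.toEquiv^[backwardReturnTime S B u] u) (backwardReturnTime S B u))⁻¹

theorem correction_of_notMem (E : SkewExt S) {u : X} (hu : u ∉ B) : E.correction B u = 1 := by
  rw [correction, backwardReturnTime_of_notMem hu]
  exact inv_one

variable [SFinite μ]

noncomputable def returnAut (E : SkewExt S) (s : ℕ) : Aut (X × X) (μ.prod μ) :=
  E.prod ^ s * (prodId S ^ s)⁻¹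

theorem isFiberwise_returnAut (E : SkewExt S) (s : ℕ) :
    IsFiberwise (E.returnAut s) fun u => cocycle S E.T (S⁻¹.toEquiv^[s] u) s := by
  intro u v
  have h : (prodId S ^ s)⁻¹.toEquiv (u, v) = (S⁻¹.toEquiv^[s] u, v) := by
    rw [Aut.inv_toEquiv, MeasurableEquiv.symm_apply_eq, prodId_pow_apply, Aut.iterate_iterate_inv]
  rw [returnAut, Aut.mul_apply, h, E.prod_pow_apply, Aut.iterate_iterate_inv]

noncomputable def correctionAut (E : SkewExt S) (hB : MeasurableSet B) :
    Aut (X × X) (μ.prod μ) :=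
  Aut.ofFiberwise (E.correction B)
    (IsFiberwise.measurable_glue (fun s => (E.isFiberwise_returnAut s).inv)
      (measurable_backwardReturnTime hB))
    (IsFiberwise.measurable_glue E.isFiberwise_returnAut (measurable_backwardReturnTime hB))

theorem isFiberwise_correctionAut (E : SkewExt S) (hB : MeasurableSet B) :
    IsFiberwise (E.correctionAut hB) (E.correction B) :=
  Aut.isFiberwise_ofFiberwise _ _ _

noncomputable def perturb (E : SkewExt S) (hB : MeasurableSet B) : SkewExt S where
  T x := E.correction B (S.toEquiv x) * E.T x
  prod := E.correctionAut hB * E.prod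
  spec p := by
    rw [Aut.mul_apply, E.spec]
    rfl

theorem perturb_cocycle_succ (E : SkewExt S) (hB : MeasurableSet B) {x : X} {d : ℕ}
    (hmid : ∀ t, 0 < t → t ≤ d → S.toEquiv^[t] x ∉ B) :
    cocycle S (E.perturb hB).T x (d + 1) =
      E.correction B (S.toEquiv^[d + 1] x) * cocycle S E.T x (d + 1) := by
  induction d with
  | zero => rfl
  | succ d ih =>
    rw [cocycle, ih fun t ht htd => hmid t ht (by omega),
      E.correction_of_notMem (hmid (d + 1) d.succ_pos le_rfl), one_mul, cocycle,
      Function.iterate_succ_apply' _ (d + 1)]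
    rfl

theorem perturb_cocycle_eq_one_of_excursion (E : SkewExt S) (hB : MeasurableSet B) {x : X}
    {d : ℕ} (hx : x ∈ B) (hd : 0 < d) (hdB : S.toEquiv^[d] x ∈ B)
    (hmid : ∀ t, 0 < t → t < d → S.toEquiv^[t] x ∉ B) :
    cocycle S (E.perturb hB).T x d = 1 := by
  obtain ⟨d, rfl⟩ := Nat.exists_eq_add_of_lt hd
  rw [zero_add] at hdB hmid ⊢
  rw [E.perturb_cocycle_succ hB fun t ht htd => hmid t ht (by omega), correction,
    backwardReturnTime_iterate hx d.succ_pos hdB hmid, S.inv_iterate_iterate le_rfl,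
    Nat.sub_self, Function.iterate_zero_apply, inv_mul_cancel]

theorem perturb_cocycle_eq_one (E : SkewExt S) (hB : MeasurableSet B) {n : ℕ}
    (hn : 0 < n) {x : X} (hx : x ∈ B) (hnB : S.toEquiv^[n] x ∈ B) :
    cocycle S (E.perturb hB).T x n = 1 := by
  induction n using Nat.strong_induction_on generalizing x with
  | _ n ih =>
  by_cases h : ∃ t, 0 < t ∧ t < n ∧ S.toEquiv^[t] x ∈ B
  · obtain ⟨t, ht, htn, htB⟩ := h
    obtain ⟨k, rfl⟩ := Nat.exists_eq_add_of_lt htn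
    have hkB : S.toEquiv^[k + 1] (S.toEquiv^[t] x) ∈ B := by
      rwa [← Function.iterate_add_apply, add_comm, ← add_assoc]
    rw [add_assoc, cocycle_add, ih (k + 1) (by omega) k.succ_pos htB hkB,
      ih t (by omega) ht hx htB, one_mul]
  · push Not at h
    exact E.perturb_cocycle_eq_one_of_excursion hB hx hn hnB fun t ht htn => h t ht htn

theorem exists_lt_measure_perturb_cocycle_eq_one [IsFiniteMeasure μ] (E : SkewExt S)
    (hB : MeasurableSet B) (hB₀ : μ B ≠ 0) (N : ℕ) :
    ∃ n > N, 0 < μ {x | cocycle S (E.perturb hB).T x n = 1} := by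
  obtain ⟨n, hnN, hn⟩ :=
    S.mp.conservative.exists_gt_measure_inter_ne_zero hB.nullMeasurableSet hB₀ N
  exact ⟨n, hnN, (pos_iff_ne_zero.2 hn).trans_le (measure_mono fun x hx =>
    E.perturb_cocycle_eq_one hB (by omega) hx.1 hx.2)⟩

theorem halmos_perturb_le [IsProbabilityMeasure μ] (A₂ : ℕ → Set (X × X)) (E : SkewExt S)
    (hB : MeasurableSet B) : halmos A₂ E.prod (E.perturb hB).prod ≤ 4 * (μ B).toReal := by
  have hfix : ∀ z ∉ B ×ˢ univ,
      (E.correctionAut hB).toEquiv z = z ∧ (E.correctionAut hB)⁻¹.toEquiv z = z := by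
    rintro ⟨u, v⟩ hz
    have hu : u ∉ B := fun hu => hz ⟨hu, mem_univ v⟩
    rw [E.isFiberwise_correctionAut hB, (E.isFiberwise_correctionAut hB).inv]
    simp only [E.correction_of_notMem hu, inv_one, Aut.one_apply, and_self]
  calc halmos A₂ E.prod (E.perturb hB).prod ≤ 4 * ((μ.prod μ) (B ×ˢ univ)).toReal :=
        halmos_mul_left_le A₂ hfix E.prod
    _ = 4 * (μ B).toReal := by rw [Measure.prod_prod, measure_univ, mul_one]

end SkewExt

end Perturbation

theorem rec_contains_dense_Gdelta_general {X : Type*} [MeasurableSpace X] [StandardBorelSpace X]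
    (μ : Measure X) [IsProbabilityMeasure μ] (S : Aut X μ)
    (hS : Aperiodic S)
    (A : ℕ → Set X) (hAm : ∀ i, MeasurableSet (A i))
    (A₂ : ℕ → Set (X × X))
    (hA₂d : ∀ B : Set (X × X), MeasurableSet B → ∀ ε > (0 : ℝ),
      ∃ i, (μ.prod μ) (symmDiff B (A₂ i)) < ENNReal.ofReal ε) :
    ∃ D : Set (SkewExt S),
      D ⊆ {E : SkewExt S | ∀ m : ℕ, 1 ≤ m → ∀ N : ℕ, ∃ n > N,
        0 < μ {x : X | halmos A (cocycle S E.T x n) (Aut.id μ) < 1 / m}} ∧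
      IsGdeltaWrt (fun E F : SkewExt S => halmos A₂ E.prod F.prod) D ∧
      IsDenseWrt (fun E F : SkewExt S => halmos A₂ E.prod F.prod) D := by
  have : NullSingletonClass μ := ⟨hS.measure_singleton⟩
  refine ⟨_, subset_rfl, ⟨fun k => {E | 1 ≤ k.unpair.1 → ∃ n > k.unpair.2,
    0 < μ {x | halmos A (cocycle S E.T x n) 1 < 1 / k.unpair.1}}, fun k E hE => ?_, ?_⟩, ?_⟩
  · by_cases hm : 1 ≤ k.unpair.1
    · obtain ⟨n, hn, hE⟩ := hE hm
      obtain ⟨ε, hε, hF⟩ := isOpenWrt_setOf_measure_halmos_cocycle_lt_pos hA₂d hAm n _ E hE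
      exact ⟨ε, hε, fun F hEF _ => ⟨n, hn, hF F hEF⟩⟩
    · exact ⟨1, one_pos, fun F _ hm' => absurd hm' hm⟩
  · ext E
    simp only [mem_iInter, mem_ofPred_eq, Aut.id_eq_one]
    refine ⟨fun h k hk => h _ hk _, fun h m hm N => ?_⟩
    simpa only [Nat.unpair_pair] using h (Nat.pair m N) (by simpa only [Nat.unpair_pair] using hm)
  · intro E ε hε
    obtain ⟨B, hB, hB₀, hBε⟩ := exists_measurableSet_measure_pos_lt (μ := μ)
      (ENNReal.ofReal_pos.2 (by positivity : 0 < ε / 4)).ne'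
    refine ⟨E.perturb hB, fun m hm N => ?_, ?_⟩
    · obtain ⟨n, hn, hpos⟩ := E.exists_lt_measure_perturb_cocycle_eq_one hB hB₀.ne' N
      refine ⟨n, hn, hpos.trans_le (measure_mono fun x (hx : _ = 1) => ?_)⟩
      simp only [mem_ofPred_eq, Aut.id_eq_one, hx, halmos_self]
      positivity
    · have := ENNReal.toReal_lt_of_lt_ofReal hBε
      linarith [E.halmos_perturb_le A₂ hB]

/-- Theorem 1: if `S` is aperiodic, then `Rec(S)` contains a dense `G_δ` subset
of `Ext(S)`; recurrence is a typical property of extensions of `S`. -/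
theorem rec_contains_dense_Gdelta {X : Type*} [MeasurableSpace X] [StandardBorelSpace X]
    (μ : Measure X) [IsProbabilityMeasure μ] (S : Aut X μ)
    (hS : Aperiodic S)
    (A : ℕ → Set X) (hAm : ∀ i, MeasurableSet (A i))
    (hAd : ∀ B : Set X, MeasurableSet B → ∀ ε > (0 : ℝ),
      ∃ i, μ (symmDiff B (A i)) < ENNReal.ofReal ε)
    (A₂ : ℕ → Set (X × X)) (hA₂m : ∀ i, MeasurableSet (A₂ i))
    (hA₂d : ∀ B : Set (X × X), MeasurableSet B → ∀ ε > (0 : ℝ),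
      ∃ i, (μ.prod μ) (symmDiff B (A₂ i)) < ENNReal.ofReal ε) :
    ∃ D : Set (SkewExt S),
      D ⊆ {E : SkewExt S | ∀ m : ℕ, 1 ≤ m → ∀ N : ℕ, ∃ n > N,
        0 < μ {x : X | halmos A (cocycle S E.T x n) (Aut.id μ) < 1 / m}} ∧
      IsGdeltaWrt (fun E F : SkewExt S => halmos A₂ E.prod F.prod) D ∧
      IsDenseWrt (fun E F : SkewExt S => halmos A₂ E.prod F.prod) D :=
  rec_contains_dense_Gdelta_general μ S hS A hAm A₂ hA₂d
end

section
/- Let S be aperiodic. Given a skew product R = (S, T_x), ε > 0 and natural N, let B be a Rokhlin base with B, SB, ..., S^{N-1}B disjoint and μ(⊔_{i<N} S^i B) > 1 - ε. Then there exists a μ⊗μ-preserving automorphism Φ of X × X such that Φ R^i z = (S × Id)^i Φ z for all z ∈ B × X and 0 ≤ i ≤ N-1, and consequently μ⊗μ({z : Φ^{-1}(S × Id)Φ z ≠ R z}) ≤ ε + 1/N. -/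
open MeasureTheory Set

/-!
On the `i`-th level `Sⁱ B × X` of the tower put `Φ = (S × Id)ⁱ R⁻ⁱ`, and let `Φ` be the identity
off the tower. Both `R` and `S × Id` act on first coordinates by `S`, so they move each level
onto the next one; hence every `(S × Id)ⁱ R⁻ⁱ` preserves its level and the pieces glue to a
measure-preserving automorphism. On a level below the top one, `Φ R = (S × Id) Φ` is the identity
`(S × Id)ⁱ⁺¹ R⁻⁽ⁱ⁺¹⁾ R = (S × Id) (S × Id)ⁱ R⁻ⁱ`, so `Φ⁻¹ (S × Id) Φ` and `R` can differ only off
the tower, a set of measure `< ε`, or on the top level, of measure `μ B ≤ 1/N`.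
-/

open scoped ENNReal

namespace Aut

variable {Z : Type*} [MeasurableSpace Z] {ν : Measure Z}

@[simp]
lemma comp_apply (a b : Aut Z ν) (z : Z) : (a.comp b).toEquiv z = a.toEquiv (b.toEquiv z) := rfl

@[simp]
lemma inv_apply (a : Aut Z ν) (z : Z) : a.inv.toEquiv z = a.toEquiv.symm z := rfl

def pow (a : Aut Z ν) : ℕ → Aut Z ν
  | 0 => Aut.id ν
  | n + 1 => a.comp (a.pow n)

@[simp]
lemma coe_pow (a : Aut Z ν) (n : ℕ) : ⇑(a.pow n).toEquiv = a.toEquiv^[n] := by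
  induction n with
  | zero => rfl
  | succ n ih => exact (congrArg (a.toEquiv ∘ ·) ih).trans (Function.iterate_succ' _ n).symm

@[simp]
lemma coe_pow_symm (a : Aut Z ν) (n : ℕ) : ⇑(a.pow n).toEquiv.symm = a.toEquiv.symm^[n] := by
  induction n with
  | zero => rfl
  | succ n ih => exact (congrArg (· ∘ a.toEquiv.symm) ih).trans (Function.iterate_succ _ n).symm

lemma measure_iterate_image (a : Aut Z ν) (n : ℕ) (B : Set Z) :
    ν (a.toEquiv^[n] '' B) = ν B := by
  rw [← coe_pow, MeasurableEquiv.image_eq_preimage_symm]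
  exact (a.pow n).inv.mp.measure_preimage_equiv B

lemma measurableSet_iterate_image (a : Aut Z ν) (n : ℕ) {B : Set Z} (hB : MeasurableSet B) :
    MeasurableSet (a.toEquiv^[n] '' B) := by
  rwa [← coe_pow, MeasurableEquiv.measurableSet_image]

lemma measure_le_inv_of_disjoint_iterate_image [IsProbabilityMeasure ν] (a : Aut Z ν) {N : ℕ}
    {B : Set Z} (hB : MeasurableSet B)
    (hBd : ∀ i j, i < N → j < N → i ≠ j → Disjoint (a.toEquiv^[i] '' B) (a.toEquiv^[j] '' B)) :
    ν B ≤ (N : ℝ≥0∞)⁻¹ := by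
  have htower : ν (⋃ i ∈ Finset.range N, a.toEquiv^[i] '' B) = N * ν B := by
    rw [measure_biUnion_finset (fun i hi j hj hij =>
        hBd i j (Finset.mem_range.1 hi) (Finset.mem_range.1 hj) hij)
      fun i _ => a.measurableSet_iterate_image i hB]
    simp [measure_iterate_image]
  rw [ENNReal.le_inv_iff_mul_le, mul_comm, ← htower]
  exact prob_le_one

lemma measurePreserving_piecewise_id (a : Aut Z ν) {D : Set Z} [DecidablePred (· ∈ D)]
    (hD : MeasurableSet D) (haD : ∀ z, a.toEquiv z ∈ D ↔ z ∈ D) :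
    MeasurePreserving (D.piecewise a.toEquiv fun z => z) ν ν := by
  have hm : Measurable (D.piecewise a.toEquiv fun z => z) :=
    a.toEquiv.measurable.piecewise hD measurable_id
  refine ⟨hm, Measure.ext fun A hA => ?_⟩
  have hpre : a.toEquiv ⁻¹' A ∩ D = a.toEquiv ⁻¹' (A ∩ D) := by
    ext z; simp [haD]
  have hdisj : Disjoint (a.toEquiv ⁻¹' (A ∩ D)) (A \ D) :=
    disjoint_sdiff_right.mono_left fun z hz => (haD z).1 hz.2
  rw [Measure.map_apply hm hA, piecewise_preimage, Set.ite, preimage_id', hpre,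
    measure_union hdisj (hA.diff hD), a.mp.measure_preimage (hA.inter hD).nullMeasurableSet,
    measure_inter_add_sdiff A hD]

open Classical in
noncomputable def restrict (a : Aut Z ν) {D : Set Z} (hD : MeasurableSet D)
    (haD : ∀ z, a.toEquiv z ∈ D ↔ z ∈ D) : Aut Z ν where
  toEquiv :=
    { toFun := D.piecewise a.toEquiv fun z => z
      invFun := D.piecewise a.toEquiv.symm fun z => z
      left_inv := fun z => by
        by_cases hz : z ∈ D
        · simp [hz, haD]
        · simp [hz]
      right_inv := fun z => by
        by_cases hz : z ∈ D
        · have : a.toEquiv.symm z ∈ D := by rwa [← haD, MeasurableEquiv.apply_symm_apply]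
          simp [hz, this]
        · simp [hz]
      measurable_toFun := a.toEquiv.measurable.piecewise hD measurable_id
      measurable_invFun := a.toEquiv.symm.measurable.piecewise hD measurable_id }
  mp := a.measurePreserving_piecewise_id hD haD

section Restrict

variable (a : Aut Z ν) {D : Set Z} (hD : MeasurableSet D) (haD : ∀ z, a.toEquiv z ∈ D ↔ z ∈ D)
  {z : Z}

lemma restrict_apply_of_mem (hz : z ∈ D) : (a.restrict hD haD).toEquiv z = a.toEquiv z :=
  if_pos hz

lemma restrict_apply_of_notMem (hz : z ∉ D) : (a.restrict hD haD).toEquiv z = z :=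
  if_neg hz

end Restrict

section Glue

variable {D : ℕ → Set Z} (hD : ∀ i, MeasurableSet (D i)) {Q : ℕ → Aut Z ν}
  (hQD : ∀ i z, (Q i).toEquiv z ∈ D i ↔ z ∈ D i)

noncomputable def glue : ℕ → Aut Z ν
  | 0 => Aut.id ν
  | n + 1 => ((Q n).restrict (hD n) (hQD n)).comp (glue n)

lemma glue_apply_of_forall_notMem {n : ℕ} {z : Z} (hz : ∀ i < n, z ∉ D i) :
    (glue hD hQD n).toEquiv z = z := by
  induction n with
  | zero => rfl
  | succ n ih =>
    rw [glue, comp_apply, ih fun i hi => hz i (by omega),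
      restrict_apply_of_notMem _ _ _ (hz n n.lt_succ_self)]

lemma glue_apply_of_mem {n : ℕ} (hDd : ∀ i j, i < n → j < n → i ≠ j → Disjoint (D i) (D j))
    {i : ℕ} (hi : i < n) {z : Z} (hz : z ∈ D i) : (glue hD hQD n).toEquiv z = (Q i).toEquiv z := by
  induction n with
  | zero => omega
  | succ n ih =>
    rw [glue, comp_apply]
    obtain hin | rfl := Nat.lt_succ_iff_lt_or_eq.1 hi
    · have hQz : (Q i).toEquiv z ∉ D n := fun h =>
        (hDd i n (by omega) n.lt_succ_self (by omega)).le_bot ⟨(hQD i z).2 hz, h⟩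
      rw [ih (fun j k hj hk => hDd j k (by omega) (by omega)) hin,
        restrict_apply_of_notMem _ _ _ hQz]
    · have hz' : ∀ j < i, z ∉ D j := fun j hj h =>
        (hDd j i (by omega) hi (by omega)).le_bot ⟨h, hz⟩
      rw [glue_apply_of_forall_notMem hD hQD hz', restrict_apply_of_mem _ _ _ hz]

end Glue

end Aut

section Tower

variable {Z : Type*} [MeasurableSpace Z] {ν : Measure Z}

theorem exists_intertwining_on_tower (R P : Aut Z ν) {D : ℕ → Set Z}
    (hD : ∀ i, MeasurableSet (D i)) {N : ℕ}
    (hDd : ∀ i j, i < N → j < N → i ≠ j → Disjoint (D i) (D j))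
    (hR : ∀ i z, R.toEquiv^[i] z ∈ D i ↔ z ∈ D 0) (hP : ∀ i z, P.toEquiv^[i] z ∈ D i ↔ z ∈ D 0) :
    ∃ Φ : Aut Z ν,
      (∀ z ∈ D 0, ∀ i < N, Φ.toEquiv (R.toEquiv^[i] z) = P.toEquiv^[i] (Φ.toEquiv z)) ∧
      {z | Φ.toEquiv.symm (P.toEquiv (Φ.toEquiv z)) ≠ R.toEquiv z} ⊆
        (⋃ i < N, D i)ᶜ ∪ D (N - 1) := by
  have hRR : ∀ i z, R.toEquiv^[i] (R.toEquiv.symm^[i] z) = z := fun i =>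
    Function.LeftInverse.iterate R.toEquiv.apply_symm_apply i
  have hRsymm : ∀ i z, R.toEquiv.symm^[i] z ∈ D 0 ↔ z ∈ D i := fun i z => by
    rw [← hR, hRR]
  set Q : ℕ → Aut Z ν := fun i => (P.pow i).comp (R.pow i).inv
  have hQ : ∀ i z, (Q i).toEquiv z = P.toEquiv^[i] (R.toEquiv.symm^[i] z) := by
    simp [Q]
  have hQD : ∀ i z, (Q i).toEquiv z ∈ D i ↔ z ∈ D i := fun i z => by
    rw [hQ, hP, hRsymm]
  set Φ := Aut.glue hD hQD N
  have hΦ : ∀ i < N, ∀ z ∈ D i, Φ.toEquiv z = P.toEquiv^[i] (R.toEquiv.symm^[i] z) :=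
    fun i hi z hz => (Aut.glue_apply_of_mem hD hQD hDd hi hz).trans (hQ i z)
  refine ⟨Φ, fun z hz i hi => ?_, fun z hz => ?_⟩
  · rw [hΦ i hi _ ((hR i z).2 hz), hΦ 0 (by omega) z hz,
      Function.LeftInverse.iterate R.toEquiv.symm_apply_apply i z]
    rfl
  · by_contra hzs
    simp only [mem_union, mem_compl_iff, mem_iUnion, not_or, not_not] at hzs
    obtain ⟨⟨i, hi, hzi⟩, hzN⟩ := hzs
    have hi1 : i + 1 < N := by
      by_contra h
      exact hzN (by rwa [show N - 1 = i by omega])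
    have hRz : R.toEquiv z ∈ D (i + 1) := by
      rw [← hRsymm, Function.iterate_succ_apply, R.toEquiv.symm_apply_apply, hRsymm]
      exact hzi
    apply hz
    rw [MeasurableEquiv.symm_apply_eq, hΦ (i + 1) hi1 _ hRz, hΦ i (by omega) z hzi,
      Function.iterate_succ_apply R.toEquiv.symm, R.toEquiv.symm_apply_apply,
      Function.iterate_succ_apply' P.toEquiv]

end Tower

lemma iterate_mem_image_prod_univ_iff {α β : Type*} {F : α × β → α × β} {f : α → α}
    (hf : Function.Injective f) (hF : Function.Semiconj Prod.fst F f) (n : ℕ) (B : Set α)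
    (z : α × β) : F^[n] z ∈ (f^[n] '' B) ×ˢ univ ↔ z ∈ B ×ˢ univ := by
  simp [hF.iterate_right n z, (hf.iterate n).mem_set_image]

theorem rokhlin_tower_conjugation_general {X : Type*} [MeasurableSpace X]
    (μ : Measure X) [IsProbabilityMeasure μ] (S : Aut X μ)
    (E : SkewExt S)
    (ε : ℝ) (hε : 0 < ε) (N : ℕ) (hN : 1 ≤ N)
    (B : Set X) (hBm : MeasurableSet B)
    (hBd : ∀ i j, i < N → j < N → i ≠ j →
      Disjoint (S.toEquiv^[i] '' B) (S.toEquiv^[j] '' B))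
    (hBc : 1 - ENNReal.ofReal ε < μ (⋃ i < N, S.toEquiv^[i] '' B)) :
    ∃ Φ : Aut (X × X) (μ.prod μ),
      (∀ z ∈ B ×ˢ (univ : Set X), ∀ i < N,
        Φ.toEquiv ((E.prod.toEquiv)^[i] z) = ((prodId S).toEquiv)^[i] (Φ.toEquiv z)) ∧
      (μ.prod μ) {z : X × X |
          Φ.toEquiv.symm ((prodId S).toEquiv (Φ.toEquiv z)) ≠ E.prod.toEquiv z}
        ≤ ENNReal.ofReal (ε + 1 / N) := by
  set D : ℕ → Set (X × X) := fun i => (S.toEquiv^[i] '' B) ×ˢ univ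
  have hD0 : D 0 = B ×ˢ univ := by simp [D]
  have hlevel {F : X × X → X × X} (hF : Function.Semiconj Prod.fst F S.toEquiv) (i : ℕ)
      (z : X × X) : F^[i] z ∈ D i ↔ z ∈ D 0 :=
    hD0 ▸ iterate_mem_image_prod_univ_iff S.toEquiv.injective hF i B z
  have hDm (i : ℕ) : MeasurableSet (D i) := (S.measurableSet_iterate_image i hBm).prod .univ
  obtain ⟨Φ, hΦ, hbad⟩ := exists_intertwining_on_tower E.prod (prodId S) hDm
    (fun i j hi hj hij => (hBd i j hi hj hij).set_prod_left _ _)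
    (hlevel fun z => by rw [E.spec]) (hlevel fun _ => rfl)
  refine ⟨Φ, fun z hz i hi => hΦ z (by rwa [hD0]) i hi, ?_⟩
  have hprod (A : Set X) : μ.prod μ (A ×ˢ univ) = μ A := by simp [Measure.prod_prod]
  have htower : ⋃ i < N, D i = (⋃ i < N, S.toEquiv^[i] '' B) ×ˢ univ := by
    simp only [D, iUnion_prod_const]
  calc _ ≤ μ.prod μ ((⋃ i < N, D i)ᶜ ∪ D (N - 1)) := measure_mono hbad
    _ ≤ μ.prod μ (⋃ i < N, D i)ᶜ + μ.prod μ (D (N - 1)) := measure_union_le _ _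
    _ ≤ ENNReal.ofReal ε + ENNReal.ofReal (1 / N) := add_le_add ?_ ?_
    _ = _ := (ENNReal.ofReal_add hε.le (by positivity)).symm
  · rw [prob_compl_eq_one_sub (.iUnion fun i => .iUnion fun _ => hDm i), htower, hprod,
      tsub_le_iff_left]
    exact tsub_le_iff_right.1 hBc.le
  · rw [hprod, S.measure_iterate_image, one_div, ENNReal.ofReal_inv_of_pos (Nat.cast_pos.2 hN),
      ENNReal.ofReal_natCast]
    exact S.measure_le_inv_of_disjoint_iterate_image hBm hBd

/-- Given a Rokhlin base `B` of height `N` for an aperiodic `S` and a skew product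
`R` over `S`, there is a `μ⊗μ`-preserving `Φ` intertwining the towers of `R` and
`S × Id` over `B × X` and such that `μ⊗μ {z : Φ⁻¹(S × Id)Φ z ≠ R z} ≤ ε + 1/N`. -/
theorem rokhlin_tower_conjugation {X : Type*} [MeasurableSpace X] [StandardBorelSpace X]
    (μ : Measure X) [IsProbabilityMeasure μ] (S : Aut X μ)
    (hS : Aperiodic S) (E : SkewExt S)
    (ε : ℝ) (hε : 0 < ε) (N : ℕ) (hN : 1 ≤ N)
    (B : Set X) (hBm : MeasurableSet B)
    (hBd : ∀ i j, i < N → j < N → i ≠ j →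
      Disjoint (S.toEquiv^[i] '' B) (S.toEquiv^[j] '' B))
    (hBc : 1 - ENNReal.ofReal ε < μ (⋃ i < N, S.toEquiv^[i] '' B)) :
    ∃ Φ : Aut (X × X) (μ.prod μ),
      (∀ z ∈ B ×ˢ (univ : Set X), ∀ i < N,
        Φ.toEquiv ((E.prod.toEquiv)^[i] z) = ((prodId S).toEquiv)^[i] (Φ.toEquiv z)) ∧
      (μ.prod μ) {z : X × X |
          Φ.toEquiv.symm ((prodId S).toEquiv (Φ.toEquiv z)) ≠ E.prod.toEquiv z}
        ≤ ENNReal.ofReal (ε + 1 / N) :=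
  rokhlin_tower_conjugation_general μ S E ε hε N hN B hBm hBd hBc
end
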